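/- arXiv:1911.03383 — 6 statements merged into one kernel-verified Lean document; each statement's English description precedes it below -/
import Mathlib

section
/- Let M be a positive integer, 1 < q < M+1, and j ∈ {1,...,M}. If x ∈ [j/q, (j-1)/q + M/(q²-q)], then x has an expansion in base q (over alphabet {0,...,M}) whose first digit is j, and also an expansion whose first digit is j-1. -/
set_option maxHeartbeats 1000000

open Finset

private def prep (d : ℕ) (c : ℕ → ℕ) : ℕ → ℕ
  | 0 => d
  | n + 1 => c n

private noncomputable def grem (q : ℝ) (M : ℕ) (y : ℝ) : ℕ → ℝ
  | 0 => y
  | n + 1 => q * grem q M y n - min M ⌊q * grem q M y n⌋₊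

private noncomputable def gdig (q : ℝ) (M : ℕ) (y : ℝ) (n : ℕ) : ℕ :=
  min M ⌊q * grem q M y n⌋₊

private lemma grem_bound (M : ℕ) (q : ℝ) (hq1 : 1 < q) (hq2 : q < M + 1)
    (y : ℝ) (hy0 : 0 ≤ y) (hy1 : y ≤ M / (q - 1)) :
    ∀ n, 0 ≤ grem q M y n ∧ grem q M y n ≤ M / (q - 1) := by
  have hq0 : (0:ℝ) < q - 1 := by linarith
  have hM1 : (1:ℝ) ≤ M / (q - 1) := by
    rw [le_div_iff₀ hq0]; linarith
  intro n
  induction n with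
  | zero => exact ⟨hy0, hy1⟩
  | succ n ih =>
    obtain ⟨h0, h1⟩ := ih
    set r := grem q M y n with hr
    have hqr : 0 ≤ q * r := mul_nonneg (by linarith) h0
    have hstep : grem q M y (n+1) = q * r - min M ⌊q * r⌋₊ := rfl
    rw [hstep]
    by_cases hc : ⌊q * r⌋₊ ≤ M
    · rw [min_eq_right (by exact_mod_cast hc)]
      constructor
      · have := Nat.floor_le hqr
        linarith
      · have h2 := Nat.lt_floor_add_one (q * r)
        have h3 : q * r - ⌊q * r⌋₊ < 1 := by linarith
        linarith
    · push_neg at hc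
      rw [min_eq_left (by exact_mod_cast hc.le)]
      constructor
      · have h4 : (M : ℝ) + 1 ≤ ⌊q * r⌋₊ := by exact_mod_cast hc
        have := Nat.floor_le hqr
        linarith
      · have h2 : q * r ≤ q * (M / (q - 1)) :=
          mul_le_mul_of_nonneg_left h1 (by linarith)
        have h3 : q * (M / (q - 1)) = M + M / (q - 1) := by
          field_simp; ring
        linarith

private lemma gsum (M : ℕ) (q : ℝ) (hq1 : 1 < q) (y : ℝ) :
    ∀ n, ∑ i ∈ range n, (gdig q M y i : ℝ) / q ^ (i + 1) = y - grem q M y n / q ^ n := by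
  have hq0 : (0:ℝ) < q := by linarith
  intro n
  induction n with
  | zero => simp [grem]
  | succ n ih =>
    rw [Finset.sum_range_succ, ih]
    have hstep : grem q M y (n+1) = q * grem q M y n - min M ⌊q * grem q M y n⌋₊ := rfl
    have hd : (gdig q M y n : ℝ) = min M ⌊q * grem q M y n⌋₊ := by
      simp [gdig]
    rw [hstep, hd]
    have hpow : q ^ (n+1) = q * q ^ n := by ring
    field_simp
    ring

private lemma key (M : ℕ) (q : ℝ) (hq1 : 1 < q) (hq2 : q < M + 1)
    (y : ℝ) (hy0 : 0 ≤ y) (hy1 : y ≤ M / (q - 1)) :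
    ∃ c : ℕ → ℕ, (∀ i, c i ≤ M) ∧ (∑' i : ℕ, (c i : ℝ) / q ^ (i + 1)) = y := by
  have hq0 : (0:ℝ) < q := by linarith
  refine ⟨gdig q M y, fun i => min_le_left _ _, ?_⟩
  have hb := grem_bound M q hq1 hq2 y hy0 hy1
  have hnn : ∀ i : ℕ, 0 ≤ (gdig q M y i : ℝ) / q ^ (i + 1) := fun i =>
    div_nonneg (Nat.cast_nonneg _) (pow_nonneg hq0.le _)
  have h1 : Filter.Tendsto (fun n : ℕ => grem q M y n / q ^ n) Filter.atTop (nhds 0) := by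
    have hlt : (1:ℝ)/q < 1 := by rw [div_lt_one hq0]; exact hq1
    have hgeo : Filter.Tendsto (fun n : ℕ => (M / (q-1)) * (1/q) ^ n) Filter.atTop (nhds 0) := by
      have := tendsto_pow_atTop_nhds_zero_of_lt_one (by positivity : (0:ℝ) ≤ 1/q) hlt
      simpa using this.const_mul (M / (q-1) : ℝ)
    apply squeeze_zero (fun n => div_nonneg (hb n).1 (pow_nonneg hq0.le n)) (fun n => ?_) hgeo
    have he : (M/(q-1):ℝ) * (1/q)^n = (M/(q-1)) / q^n := by
      rw [div_pow, one_pow]; ring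
    rw [he]
    gcongr
    exact (hb n).2
  have htend : Filter.Tendsto (fun n => ∑ i ∈ range n, (gdig q M y i : ℝ) / q ^ (i + 1))
      Filter.atTop (nhds y) := by
    simp only [gsum M q hq1 y]
    simpa using Filter.Tendsto.sub (tendsto_const_nhds (x := y)) h1
  exact ((hasSum_iff_tendsto_nat_of_nonneg hnn y).2 htend).tsum_eq

theorem stmt3 (M : ℕ) (hM : 0 < M) (q : ℝ) (hq1 : 1 < q) (hq2 : q < M + 1)
    (j : ℕ) (hj1 : 1 ≤ j) (hj2 : j ≤ M)
    (x : ℝ) (hx : x ∈ Set.Icc ((j : ℝ) / q) (((j : ℝ) - 1) / q + M / (q ^ 2 - q))) :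
    (∃ c : ℕ → ℕ, (∀ i, c i ≤ M) ∧ (∑' i : ℕ, (c i : ℝ) / q ^ (i + 1)) = x ∧ c 0 = j) ∧
    (∃ c : ℕ → ℕ, (∀ i, c i ≤ M) ∧ (∑' i : ℕ, (c i : ℝ) / q ^ (i + 1)) = x ∧ c 0 = j - 1) := by
  obtain ⟨hxl, hxr⟩ := hx
  have hq0 : (0:ℝ) < q := by linarith
  have hq1' : (0:ℝ) < q - 1 := by linarith
  have hqq : q^2 - q ≠ 0 := by nlinarith
  have hxl' : (j : ℝ) ≤ q * x := by
    rw [div_le_iff₀ hq0] at hxl; linarith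
  have hxr' : q * x ≤ (j : ℝ) - 1 + M / (q - 1) := by
    have he : q * (((j:ℝ)-1)/q + M/(q^2-q)) = (j:ℝ) - 1 + M / (q - 1) := by
      field_simp
    calc q * x ≤ q * (((j:ℝ)-1)/q + M/(q^2-q)) := by
          exact mul_le_mul_of_nonneg_left hxr hq0.le
      _ = _ := he
  have hM1 : (1:ℝ) ≤ M / (q - 1) := by
    rw [le_div_iff₀ hq1']; push_cast; linarith
  have main : ∀ d : ℕ, d ≤ M → 0 ≤ q * x - d → q * x - d ≤ M / (q-1) →
      ∃ c : ℕ → ℕ, (∀ i, c i ≤ M) ∧ (∑' i : ℕ, (c i : ℝ) / q ^ (i + 1)) = x ∧ c 0 = d := by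
    intro d hd h0 h1
    obtain ⟨c, hc, hsum⟩ := key M q hq1 hq2 (q * x - d) h0 h1
    refine ⟨prep d c, fun i => by cases i <;> simp [prep, hd, hc], ?_, rfl⟩
    have hle : ∀ i : ℕ, ((prep d c i : ℕ) : ℝ) ≤ M := by
      intro i; cases i
      · exact_mod_cast hd
      · exact_mod_cast hc _
    have hsummable : Summable (fun i : ℕ => ((prep d c i : ℕ) : ℝ) / q ^ (i + 1)) := by
      refine Summable.of_nonneg_of_le (fun i => by positivity) (fun i => ?_)
        ((summable_geometric_of_lt_one (r := 1/q) (by positivity) (by rw [div_lt_one hq0]; exact hq1)).mul_left ((M:ℝ)/q))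
      have he : (M:ℝ) / q * (1/q)^i = (M:ℝ) / q^(i+1) := by
        rw [div_pow, one_pow]; ring
      rw [he]
      gcongr
      exact_mod_cast hle i
    rw [Summable.tsum_eq_zero_add hsummable]
    have hshift : (∑' n : ℕ, ((prep d c (n+1) : ℕ) : ℝ) / q ^ (n + 1 + 1))
        = (1/q) * (∑' n : ℕ, (c n : ℝ) / q ^ (n + 1)) := by
      rw [← tsum_mul_left]
      congr 1
      funext n
      have hp : q ^ (n + 1 + 1) = q * q ^ (n+1) := by ring
      rw [show prep d c (n+1) = c n from rfl, hp]
      field_simp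
    rw [hshift, hsum]
    show (prep d c 0 : ℝ) / q ^ (0+1) + _ = x
    rw [show prep d c 0 = d from rfl]
    field_simp
    try ring
  constructor
  · apply main j hj2
    · linarith
    · linarith
  · have hcast : ((j - 1 : ℕ) : ℝ) = (j : ℝ) - 1 := by
      rw [Nat.cast_sub hj1, Nat.cast_one]
    apply main (j-1) (le_trans (Nat.sub_le _ _) hj2) <;> rw [hcast]
    · linarith
    · linarith
end

section
/- Let M be a positive integer, 1 < q ≤ M+1, and x ∈ [0, M/(q-1)]. Define the switch region S_q as the union over j = 1,...,M of the intervals [j/q, (j-1)/q + M/(q²-q)]. An expansion (c_i) of x in base q is the unique expansion of x if and only if for every k ≥ 1, the tail value x_k := Σ_{i=0}^∞ c_{k+i}/q^{i+1} does not belong to S_q. -/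
/-!
Call a digit `a ≤ M` admissible for `y` when `q * y - a ∈ [0, M/(q-1)]`; these are exactly the
possible first digits of expansions of `y`, because `q ≤ M + 1` lets the capped greedy algorithm
expand every point of `[0, M/(q-1)]`. A point lies in the switch region iff it has two
admissible digits (then `j - 1` and `j` for the relevant `j`). If two expansions of `x` first
differ at position `k`, both digits are admissible for the common tail value `x_k`. Conversely,
if `x_k` is in the switch region, keeping `c` before position `k` and continuing with an
expansion of `x_k` whose first digit differs from `c k` gives a second expansion of `x`.
-/

open Set Filter Topology Finset

noncomputable def expansionValue (q : ℝ) (c : ℕ → ℕ) : ℝ :=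
  ∑' i, (c i : ℝ) / q ^ (i + 1)

def IsExpansion (M : ℕ) (q x : ℝ) (c : ℕ → ℕ) : Prop :=
  (∀ i, c i ≤ M) ∧ expansionValue q c = x

def splice (c : ℕ → ℕ) (k : ℕ) (g : ℕ → ℕ) (i : ℕ) : ℕ :=
  if i < k then c i else g (i - k)

section Splice

variable {M : ℕ} {c g : ℕ → ℕ} {k : ℕ}

lemma splice_of_lt {i : ℕ} (hi : i < k) : splice c k g i = c i := if_pos hi

lemma splice_add_left : (fun i => splice c k g (k + i)) = g := by
  funext i; simp [splice]

lemma splice_self : splice c k g k = g 0 := by simp [splice]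

lemma splice_le (hc : ∀ i, c i ≤ M) (hg : ∀ i, g i ≤ M) (i : ℕ) : splice c k g i ≤ M := by
  unfold splice; split_ifs
  exacts [hc i, hg _]

end Splice

section Expansions

variable {M : ℕ} {q : ℝ}

lemma hasSum_const_div_pow_succ (hq : 1 < q) :
    HasSum (fun i : ℕ => (M : ℝ) / q ^ (i + 1)) (M / (q - 1)) := by
  have hq0 : q - 1 ≠ 0 := by linarith
  have hgeom := (hasSum_geometric_of_lt_one (by positivity) (inv_lt_one_of_one_lt₀ hq)).mul_left
    ((M : ℝ) / q)
  rw [show (M : ℝ) / q * (1 - q⁻¹)⁻¹ = M / (q - 1) by field_simp] at hgeom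
  refine hgeom.congr_fun fun i => ?_
  rw [inv_pow, pow_succ]
  field_simp

lemma digit_div_pow_le {c : ℕ → ℕ} (hq : 1 < q) (hc : ∀ i, c i ≤ M) (i : ℕ) :
    (c i : ℝ) / q ^ (i + 1) ≤ M / q ^ (i + 1) := by
  gcongr
  exact_mod_cast hc i

lemma summable_digit_div_pow {c : ℕ → ℕ} (hq : 1 < q) (hc : ∀ i, c i ≤ M) :
    Summable (fun i => (c i : ℝ) / q ^ (i + 1)) :=
  (hasSum_const_div_pow_succ hq).summable.of_nonneg_of_le (fun i => by positivity)
    (digit_div_pow_le hq hc)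

lemma expansionValue_mem_Icc {c : ℕ → ℕ} (hq : 1 < q) (hc : ∀ i, c i ≤ M) :
    expansionValue q c ∈ Icc 0 (M / (q - 1)) :=
  ⟨tsum_nonneg fun i => by positivity,
    hasSum_le (digit_div_pow_le hq hc) (summable_digit_div_pow hq hc).hasSum
      (hasSum_const_div_pow_succ hq)⟩

lemma expansionValue_eq_sum_add_tail {c : ℕ → ℕ} (hq : 1 < q) (hc : ∀ i, c i ≤ M) (k : ℕ) :
    expansionValue q c = ∑ i ∈ range k, (c i : ℝ) / q ^ (i + 1)
      + expansionValue q (fun i => c (k + i)) / q ^ k := by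
  rw [expansionValue, ← (summable_digit_div_pow hq hc).sum_add_tsum_nat_add k, expansionValue,
    ← tsum_div_const]
  congr 2
  funext i
  rw [add_comm i k, add_assoc, pow_add, div_mul_eq_div_div, div_right_comm]

end Expansions

section Greedy

noncomputable def greedyDigit (M : ℕ) (q y : ℝ) : ℕ := min M ⌊q * y⌋₊

noncomputable def greedyMap (M : ℕ) (q y : ℝ) : ℝ := q * y - greedyDigit M q y

variable {M : ℕ} {q : ℝ}

lemma mapsTo_greedyMap (hq1 : 1 < q) (hq2 : q ≤ M + 1) :
    MapsTo (greedyMap M q) (Icc 0 (M / (q - 1))) (Icc 0 (M / (q - 1))) := by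
  rintro y ⟨hy0, hyM⟩
  have hq0 : 0 < q - 1 := by linarith
  have hqy : 0 ≤ q * y := by positivity
  have hfloor : (⌊q * y⌋₊ : ℝ) ≤ q * y := Nat.floor_le hqy
  refine ⟨?_, ?_⟩
  · have : (greedyDigit M q y : ℝ) ≤ ⌊q * y⌋₊ := by exact_mod_cast min_le_right _ _
    simp only [greedyMap]; linarith
  · rcases le_total ⌊q * y⌋₊ M with h | h
    · -- the fractional part of `q * y` is below `1 ≤ M / (q - 1)`
      have hone : 1 ≤ (M : ℝ) / (q - 1) := by rw [le_div_iff₀ hq0]; linarith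
      rw [greedyMap, greedyDigit, min_eq_right h]
      linarith [Nat.lt_floor_add_one (q * y)]
    · have : q * y ≤ M + M / (q - 1) := by
        calc q * y ≤ q * (M / (q - 1)) := by gcongr
          _ = M + M / (q - 1) := by field_simp; ring
      rw [greedyMap, greedyDigit, min_eq_left h]
      linarith

lemma sum_greedyDigit_iterate (hq : q ≠ 0) (y : ℝ) (n : ℕ) :
    ∑ i ∈ range n, (greedyDigit M q ((greedyMap M q)^[i] y) : ℝ) / q ^ (i + 1)
      = y - (greedyMap M q)^[n] y / q ^ n := by
  induction n with
  | zero => simp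
  | succ n ih =>
    rw [sum_range_succ, ih, Function.iterate_succ_apply', greedyMap]
    field_simp
    ring

lemma exists_isExpansion (hq1 : 1 < q) (hq2 : q ≤ M + 1) {y : ℝ}
    (hy : y ∈ Icc 0 (M / (q - 1))) : ∃ c, IsExpansion M q y c := by
  let c i := greedyDigit M q ((greedyMap M q)^[i] y)
  have hc : ∀ i, c i ≤ M := fun i => min_le_left _ _
  refine ⟨c, hc, ?_⟩
  have horbit n : (greedyMap M q)^[n] y ∈ Icc 0 (M / (q - 1)) :=
    (mapsTo_greedyMap hq1 hq2).iterate n hy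
  have hrem : Tendsto (fun n => (greedyMap M q)^[n] y / q ^ n) atTop (𝓝 0) := by
    have hgeom : Tendsto (fun n => (M / (q - 1)) * q⁻¹ ^ n) atTop (𝓝 0) := by
      simpa using (tendsto_pow_atTop_nhds_zero_of_lt_one (by positivity)
        (inv_lt_one_of_one_lt₀ hq1)).const_mul ((M : ℝ) / (q - 1))
    refine squeeze_zero (fun n => div_nonneg (horbit n).1 (by positivity)) (fun n => ?_) hgeom
    rw [inv_pow, ← div_eq_mul_inv]
    gcongr
    exact (horbit n).2
  have hsum : HasSum (fun i => (c i : ℝ) / q ^ (i + 1)) y := by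
    rw [hasSum_iff_tendsto_nat_of_nonneg (fun i => by positivity)]
    simp_rw [c, sum_greedyDigit_iterate (by positivity : q ≠ 0) y]
    simpa using tendsto_const_nhds.sub hrem
  exact hsum.tsum_eq

end Greedy

section Admissible

variable {M : ℕ} {q : ℝ}

lemma isExpansion_splice {x : ℝ} {c g : ℕ → ℕ} (hq : 1 < q) (hc : IsExpansion M q x c) (k : ℕ)
    (hg : IsExpansion M q (expansionValue q (fun i => c (k + i))) g) :
    IsExpansion M q x (splice c k g) := by
  have hspliceM := splice_le (k := k) hc.1 hg.1
  refine ⟨hspliceM, ?_⟩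
  rw [← hc.2, expansionValue_eq_sum_add_tail hq hspliceM k, splice_add_left, hg.2,
    expansionValue_eq_sum_add_tail hq hc.1 k]
  congr 1
  exact sum_congr rfl fun i hi => by rw [splice_of_lt (mem_range.1 hi)]

lemma exists_isExpansion_head_eq_iff (hq1 : 1 < q) (hq2 : q ≤ M + 1) {a : ℕ} (ha : a ≤ M)
    {y : ℝ} : (∃ c, IsExpansion M q y c ∧ c 0 = a) ↔ q * y - a ∈ Icc 0 (M / (q - 1)) := by
  constructor
  · rintro ⟨c, ⟨hc, rfl⟩, rfl⟩
    have h := expansionValue_eq_sum_add_tail hq1 hc 1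
    simp only [range_one, sum_singleton, zero_add, pow_one] at h
    convert expansionValue_mem_Icc hq1 (fun i => hc (1 + i)) using 1
    rw [h]; field_simp; ring
  · intro hy
    obtain ⟨g, hgM, hg⟩ := exists_isExpansion hq1 hq2 hy
    have hcM := splice_le (k := 1) (fun _ => ha) hgM
    refine ⟨splice (fun _ => a) 1 g, ⟨hcM, ?_⟩, splice_of_lt one_pos⟩
    rw [expansionValue_eq_sum_add_tail hq1 hcM 1, splice_add_left, hg]
    simp only [range_one, sum_singleton, splice_of_lt one_pos, zero_add, pow_one]
    field_simp
    ring

lemma exists_ne_expansionValue_tail_eq {x : ℝ} {c d : ℕ → ℕ} (hq : 1 < q)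
    (hc : IsExpansion M q x c) (hd : IsExpansion M q x d) (hcd : c ≠ d) :
    ∃ k, c k ≠ d k ∧
      expansionValue q (fun i => c (k + i)) = expansionValue q (fun i => d (k + i)) := by
  have hex : ∃ i, c i ≠ d i := Function.ne_iff.1 hcd
  refine ⟨Nat.find hex, Nat.find_spec hex, ?_⟩
  have hprefix : ∑ i ∈ range (Nat.find hex), (c i : ℝ) / q ^ (i + 1)
      = ∑ i ∈ range (Nat.find hex), (d i : ℝ) / q ^ (i + 1) :=
    sum_congr rfl fun i hi => by rw [not_not.1 (Nat.find_min hex (mem_range.1 hi))]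
  have h := hc.2.trans hd.2.symm
  rw [expansionValue_eq_sum_add_tail hq hc.1 (Nat.find hex),
    expansionValue_eq_sum_add_tail hq hd.1 (Nat.find hex), hprefix, add_right_inj] at h
  exact (div_left_inj' (by positivity)).1 h

end Admissible

section SwitchRegion

variable {M : ℕ} {q : ℝ}

lemma mem_switchInterval_iff (hq : 1 < q) {r y : ℝ} :
    y ∈ Icc (r / q) ((r - 1) / q + M / (q ^ 2 - q)) ↔ q * y - r ∈ Icc 0 (M / (q - 1) - 1) := by
  have hq0 : 0 < q := by linarith
  have hupper : (r - 1) / q + M / (q ^ 2 - q) = (r - 1 + M / (q - 1)) / q := by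
    have : q - 1 ≠ 0 := by linarith
    rw [show q ^ 2 - q = q * (q - 1) by ring]
    field_simp
  simp only [Set.mem_Icc, hupper, div_le_iff₀ hq0, le_div_iff₀ hq0]
  constructor <;> rintro ⟨h1, h2⟩ <;> constructor <;> linarith

lemma exists_mem_switchInterval_iff (hq : 1 < q) {y : ℝ} :
    (∃ j : ℕ, 1 ≤ j ∧ j ≤ M ∧ y ∈ Icc ((j : ℝ) / q) (((j : ℝ) - 1) / q + M / (q ^ 2 - q))) ↔
      ∃ a b : ℕ, a ≠ b ∧ a ≤ M ∧ b ≤ M ∧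
        q * y - a ∈ Icc 0 (M / (q - 1)) ∧ q * y - b ∈ Icc 0 (M / (q - 1)) := by
  simp only [mem_switchInterval_iff hq, Set.mem_Icc]
  constructor
  · rintro ⟨j, hj1, hjM, h0, h1⟩
    obtain ⟨a, rfl⟩ := Nat.exists_eq_add_of_le' hj1
    push_cast at h0 h1
    exact ⟨a, a + 1, by omega, by omega, hjM, ⟨by linarith, by linarith⟩,
      by push_cast; constructor <;> linarith⟩
  · rintro ⟨a, b, hab, haM, hbM, ha, hb⟩
    wlog hlt : a < b generalizing a b
    · exact this b a hab.symm hbM haM hb ha (lt_of_le_of_ne (not_lt.1 hlt) hab.symm)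
    have hab' : (a : ℝ) + 1 ≤ b := by exact_mod_cast hlt
    exact ⟨a + 1, by omega, by omega, by push_cast; constructor <;> linarith⟩

end SwitchRegion

theorem stmt4_general (M : ℕ) (q : ℝ) (hq1 : 1 < q) (hq2 : q ≤ M + 1)
    (x : ℝ) (c : ℕ → ℕ) (hc : ∀ i, c i ≤ M)
    (hcx : (∑' i : ℕ, (c i : ℝ) / q ^ (i + 1)) = x) :
    (∀ d : ℕ → ℕ, (∀ i, d i ≤ M) → (∑' i : ℕ, (d i : ℝ) / q ^ (i + 1)) = x → d = c) ↔
      ∀ k : ℕ, ¬ ∃ j : ℕ, 1 ≤ j ∧ j ≤ M ∧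
        (∑' i : ℕ, (c (k + i) : ℝ) / q ^ (i + 1)) ∈
          Set.Icc ((j : ℝ) / q) (((j : ℝ) - 1) / q + M / (q ^ 2 - q)) := by
  have hcExp : IsExpansion M q x c := ⟨hc, hcx⟩
  constructor
  · rintro huniq k hswitch
    obtain ⟨a, b, hab, haM, hbM, ha, hb⟩ := (exists_mem_switchInterval_iff hq1).1 hswitch
    obtain ⟨e, heM, hek, he⟩ : ∃ e ≤ M, e ≠ c k ∧
        q * expansionValue q (fun i => c (k + i)) - e ∈ Icc 0 (M / (q - 1)) := by
      by_cases hak : a = c k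
      · exact ⟨b, hbM, hak ▸ hab.symm, hb⟩
      · exact ⟨a, haM, hak, ha⟩
    obtain ⟨g, hg, hge⟩ := (exists_isExpansion_head_eq_iff hq1 hq2 heM).2 he
    obtain ⟨hdM, hdx⟩ := isExpansion_splice hq1 hcExp k hg
    have hdk := congrFun (huniq _ hdM hdx) k
    rw [splice_self, hge] at hdk
    exact hek hdk
  · intro hns d hd hdx
    by_contra hne
    obtain ⟨k, hk, htail⟩ := exists_ne_expansionValue_tail_eq hq1 hcExp ⟨hd, hdx⟩ (Ne.symm hne)
    refine hns k ((exists_mem_switchInterval_iff hq1).2 ⟨c k, d k, hk, hc k, hd k, ?_, ?_⟩)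
    · exact (exists_isExpansion_head_eq_iff hq1 hq2 (hc k)).1 ⟨_, ⟨fun i => hc _, rfl⟩, rfl⟩
    · change q * expansionValue q (fun i => c (k + i)) - d k ∈ _
      rw [htail]
      exact (exists_isExpansion_head_eq_iff hq1 hq2 (hd k)).1 ⟨_, ⟨fun i => hd _, rfl⟩, rfl⟩

theorem stmt4 (M : ℕ) (hM : 0 < M) (q : ℝ) (hq1 : 1 < q) (hq2 : q ≤ M + 1)
    (x : ℝ) (hx : x ∈ Set.Icc (0 : ℝ) (M / (q - 1)))
    (c : ℕ → ℕ) (hc : ∀ i, c i ≤ M)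
    (hcx : (∑' i : ℕ, (c i : ℝ) / q ^ (i + 1)) = x) :
    (∀ d : ℕ → ℕ, (∀ i, d i ≤ M) → (∑' i : ℕ, (d i : ℝ) / q ^ (i + 1)) = x → d = c) ↔
      ∀ k : ℕ, ¬ ∃ j : ℕ, 1 ≤ j ∧ j ≤ M ∧
        (∑' i : ℕ, (c (k + i) : ℝ) / q ^ (i + 1)) ∈
          Set.Icc ((j : ℝ) / q) (((j : ℝ) - 1) / q + M / (q ^ 2 - q)) :=
  stmt4_general M q hq1 hq2 x c hc hcx
end

section
/- Let M be a positive integer, q > 1, j a cardinal with 1 ≤ j, and let U_q^j denote the set of x ∈ [0, M/(q-1)] having exactly j expansions in base q over {0,...,M}. If x ∈ U_q^j and 0 < x < 1, then for every positive integer k, the number x/q^k also belongs to U_q^j. Consequently, if U_q^j ∩ (0,1) is nonempty, then 0 is an accumulation point of U_q^j. -/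
open Filter Topology

private lemma summable_exp (M : ℕ) (q : ℝ) (hq : 1 < q) (c : ℕ → ℕ) (hc : ∀ i, c i ≤ M) :
    Summable (fun i : ℕ => (c i : ℝ) / q ^ (i + 1)) := by
  have hq0 : (0 : ℝ) < q := lt_trans one_pos hq
  have h1 : (1 : ℝ) / q < 1 := by
    rw [div_lt_one hq0]; exact hq
  have h0 : (0 : ℝ) ≤ 1 / q := by positivity
  have hs : Summable (fun i : ℕ => (M : ℝ) * (1 / q) ^ (i + 1)) := by
    exact ((summable_geometric_of_lt_one h0 h1).mul_left _).comp_injective (add_left_injective 1)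
  refine Summable.of_nonneg_of_le (fun i => by positivity) (fun i => ?_) hs
  rw [div_pow, one_pow, mul_one_div]
  gcongr
  exact_mod_cast hc i

/-- Expansions of `x` biject with expansions of `x / q` when `0 < x < 1`. -/
private lemma mk_exp_div (M : ℕ) (q : ℝ) (hq : 1 < q) (x : ℝ) (hx0 : 0 < x) (hx1 : x < 1) :
    Cardinal.mk {c : ℕ → ℕ // (∀ i, c i ≤ M) ∧
      (∑' i : ℕ, (c i : ℝ) / q ^ (i + 1)) = x / q} =
    Cardinal.mk {c : ℕ → ℕ // (∀ i, c i ≤ M) ∧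
      (∑' i : ℕ, (c i : ℝ) / q ^ (i + 1)) = x} := by
  have hq0 : (0 : ℝ) < q := lt_trans one_pos hq
  -- shift identity
  have key : ∀ d : ℕ → ℕ, (∀ i, d i ≤ M) →
      (∑' i : ℕ, (d i : ℝ) / q ^ (i + 1)) =
        (d 0 : ℝ) / q + (∑' i : ℕ, (d (i + 1) : ℝ) / q ^ (i + 1)) / q := by
    intro d hd
    have hsum := summable_exp M q hq d hd
    rw [Summable.tsum_eq_zero_add hsum]
    congr 1
    · norm_num
    · rw [← tsum_div_const]
      congr 1
      funext i
      rw [div_div, ← pow_succ]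
  -- first digit of an expansion of x/q must vanish
  have hzero : ∀ d : ℕ → ℕ, (∀ i, d i ≤ M) →
      (∑' i : ℕ, (d i : ℝ) / q ^ (i + 1)) = x / q → d 0 = 0 := by
    intro d hd hsum
    by_contra h
    have h1 : (1 : ℝ) ≤ (d 0 : ℝ) := by
      exact_mod_cast Nat.one_le_iff_ne_zero.mpr h
    have hterm : (d 0 : ℝ) / q ^ (0 + 1) ≤ x / q :=
      hsum ▸ Summable.le_tsum (summable_exp M q hq d hd) 0 (fun i _ => by positivity)
    have h2 : (d 0 : ℝ) / q ≤ x / q := by simpa using hterm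
    rw [div_le_div_iff₀ hq0 hq0] at h2
    nlinarith
  -- the tail of an expansion of x/q is an expansion of x
  have tail_eq : ∀ d : ℕ → ℕ, (∀ i, d i ≤ M) →
      (∑' i : ℕ, (d i : ℝ) / q ^ (i + 1)) = x / q →
      (∑' i : ℕ, (d (i + 1) : ℝ) / q ^ (i + 1)) = x := by
    intro d hd hsum
    have h := key d hd
    rw [hsum, hzero d hd hsum] at h
    simp only [Nat.cast_zero, zero_div, zero_add] at h
    field_simp at h
    linarith
  refine Cardinal.mk_congr ⟨?_, ?_, ?_, ?_⟩
  · rintro ⟨d, hd, hsum⟩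
    exact ⟨fun i => d (i + 1), fun i => hd _, tail_eq d hd hsum⟩
  · rintro ⟨c, hc, hsum⟩
    refine ⟨fun n => Nat.rec 0 (fun m _ => c m) n, ?_, ?_⟩
    · intro i; cases i with
      | zero => exact Nat.zero_le _
      | succ n => exact hc n
    · have hd : ∀ i, (Nat.rec 0 (fun m _ => c m) i : ℕ) ≤ M := by
        intro i; cases i with
        | zero => exact Nat.zero_le _
        | succ n => exact hc n
      rw [key _ hd]
      rw [show (fun i : ℕ => ((Nat.rec 0 (fun m _ => c m) (i+1) : ℕ) : ℝ) / q ^ (i+1)) =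
        (fun i : ℕ => (c i : ℝ) / q ^ (i+1)) from rfl, hsum]
      show ((0 : ℕ) : ℝ) / q + x / q = x / q
      simp
  · rintro ⟨d, hd, hsum⟩
    apply Subtype.ext
    funext n
    cases n with
    | zero => exact (hzero d hd hsum).symm
    | succ n => rfl
  · rintro ⟨c, hc, hsum⟩
    rfl

theorem stmt13 (M : ℕ) (hM : 0 < M) (q : ℝ) (hq : 1 < q)
    (j : Cardinal) (hj : 1 ≤ j) :
    (∀ x ∈ {y ∈ Set.Icc (0 : ℝ) (M / (q - 1)) |
        Cardinal.mk {c : ℕ → ℕ // (∀ i, c i ≤ M) ∧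
          (∑' i : ℕ, (c i : ℝ) / q ^ (i + 1)) = y} = j},
      0 < x → x < 1 → ∀ k : ℕ, 1 ≤ k →
        x / q ^ k ∈ {y ∈ Set.Icc (0 : ℝ) (M / (q - 1)) |
          Cardinal.mk {c : ℕ → ℕ // (∀ i, c i ≤ M) ∧
            (∑' i : ℕ, (c i : ℝ) / q ^ (i + 1)) = y} = j}) ∧
    ((∃ x ∈ {y ∈ Set.Icc (0 : ℝ) (M / (q - 1)) |
        Cardinal.mk {c : ℕ → ℕ // (∀ i, c i ≤ M) ∧
          (∑' i : ℕ, (c i : ℝ) / q ^ (i + 1)) = y} = j}, x ∈ Set.Ioo (0 : ℝ) 1) →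
      (0 : ℝ) ∈ closure ({y ∈ Set.Icc (0 : ℝ) (M / (q - 1)) |
        Cardinal.mk {c : ℕ → ℕ // (∀ i, c i ≤ M) ∧
          (∑' i : ℕ, (c i : ℝ) / q ^ (i + 1)) = y} = j} \ {0})) := by
  have hq0 : (0 : ℝ) < q := lt_trans one_pos hq
  -- main claim for arbitrary k
  have main : ∀ x ∈ {y ∈ Set.Icc (0 : ℝ) (M / (q - 1)) |
        Cardinal.mk {c : ℕ → ℕ // (∀ i, c i ≤ M) ∧
          (∑' i : ℕ, (c i : ℝ) / q ^ (i + 1)) = y} = j},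
      0 < x → x < 1 → ∀ k : ℕ,
        x / q ^ k ∈ {y ∈ Set.Icc (0 : ℝ) (M / (q - 1)) |
          Cardinal.mk {c : ℕ → ℕ // (∀ i, c i ≤ M) ∧
            (∑' i : ℕ, (c i : ℝ) / q ^ (i + 1)) = y} = j} := by
    intro x hx hx0 hx1 k
    induction k with
    | zero => simpa using hx
    | succ k ih =>
      have hxk0 : 0 < x / q ^ k := by positivity
      have hxk1 : x / q ^ k < 1 := by
        have h1 : (1:ℝ) ≤ q ^ k := one_le_pow₀ (le_of_lt hq)
        calc x / q ^ k ≤ x / 1 := by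
              apply div_le_div_of_nonneg_left (le_of_lt hx0) one_pos h1
          _ = x := div_one x
          _ < 1 := hx1
      obtain ⟨hicc, hcard⟩ := ih
      constructor
      · constructor
        · positivity
        · have : x / q ^ (k+1) ≤ x / q ^ k := by
            apply div_le_div_of_nonneg_left (le_of_lt hx0) (by positivity)
            exact pow_le_pow_right₀ (le_of_lt hq) (Nat.le_succ k)
          exact le_trans this hicc.2
      · have heq : x / q ^ (k + 1) = (x / q ^ k) / q := by
          rw [div_div, ← pow_succ]
        rw [heq, mk_exp_div M q hq _ hxk0 hxk1]
        exact hcard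
  constructor
  · intro x hx hx0 hx1 k _
    exact main x hx hx0 hx1 k
  · rintro ⟨x, hx, hx0, hx1⟩
    have htend : Tendsto (fun n : ℕ => x / q ^ n) atTop (𝓝 0) := by
      have h1 : |q⁻¹| < 1 := by
        rw [abs_of_pos (by positivity), inv_lt_one_iff₀]
        right; exact hq
      have := (tendsto_pow_atTop_nhds_zero_of_abs_lt_one h1).const_mul x
      rw [mul_zero] at this
      refine this.congr (fun n => ?_)
      rw [inv_pow, ← div_eq_mul_inv]
    refine mem_closure_of_tendsto htend ?_
    filter_upwards with n
    refine ⟨main x hx hx0 hx1 n, ?_⟩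
    simp only [Set.mem_singleton_iff]
    positivity
end

section
/- Let M be a positive integer, 1 < q ≤ M+1, and let α = α(q) be the quasi-greedy expansion of 1 in base q (the lexicographically largest infinite expansion of 1). Suppose a sequence (c_i) with digits in {0,...,M} satisfies: c_{n+1}c_{n+2}⋯ < α lexicographically whenever c_n < M, and (M-c_{n+1})(M-c_{n+2})⋯ < α lexicographically whenever c_n > 0. Then (c_i) is the unique expansion of the number x = Σ_{i=1}^∞ c_i/q^i in base q over the alphabet {0,...,M}. -/
/-- Lexicographic `≤` on digit sequences. -/
def lexLE (a b : ℕ → ℕ) : Prop :=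
  a = b ∨ ∃ n, (∀ i < n, a i = b i) ∧ a n < b n

/-- Lexicographic `<` on digit sequences. -/
def lexLT (a b : ℕ → ℕ) : Prop :=
  ∃ n, (∀ i < n, a i = b i) ∧ a n < b n

private lemma aux_summable {M : ℕ} {q : ℝ} (hq1 : 1 < q) (g : ℕ → ℕ) (hg : ∀ i, g i ≤ M) :
    Summable (fun i : ℕ => (g i : ℝ) / q ^ (i + 1)) := by
  have hq0 : (0:ℝ) < q := lt_trans one_pos hq1
  have hgeo : Summable (fun i : ℕ => (M : ℝ) * (1 / q) ^ i) :=
    (summable_geometric_of_lt_one (by positivity)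
      (by rw [div_lt_one hq0]; exact hq1)).mul_left _
  refine Summable.of_nonneg_of_le (fun i => by positivity) (fun i => ?_) hgeo
  have h1 : (g i : ℝ) ≤ M := by exact_mod_cast hg i
  have h2 : q ^ i ≤ q ^ (i + 1) := pow_le_pow_right₀ hq1.le (Nat.le_succ i)
  have hp : (0:ℝ) < q ^ i := by positivity
  calc (g i : ℝ) / q ^ (i + 1) ≤ (M : ℝ) / q ^ (i + 1) := by gcongr
    _ ≤ (M : ℝ) / q ^ i := by gcongr
    _ = (M : ℝ) * (1 / q) ^ i := by rw [one_div, inv_pow]; ring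

private lemma aux_geom {q : ℝ} (hq1 : 1 < q) (M : ℕ) :
    (∑' i : ℕ, (M : ℝ) / q ^ (i + 1)) = M / (q - 1) := by
  have hq0 : (0:ℝ) < q := lt_trans one_pos hq1
  have h0 : (0:ℝ) ≤ 1 / q := by positivity
  have h1 : (1:ℝ) / q < 1 := by rw [div_lt_one hq0]; exact hq1
  have hqne : q ≠ 0 := ne_of_gt hq0
  have hqm : q - 1 ≠ 0 := by intro h; nlinarith
  calc (∑' i : ℕ, (M : ℝ) / q ^ (i + 1))
      = ∑' i : ℕ, ((M : ℝ) / q) * (1 / q) ^ i := by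
        refine tsum_congr fun i => ?_
        rw [one_div, inv_pow, pow_succ]
        field_simp
    _ = ((M : ℝ) / q) * (1 - 1 / q)⁻¹ := by
        rw [tsum_mul_left, tsum_geometric_of_lt_one h0 h1]
    _ = M / (q - 1) := by
        rw [show (1 : ℝ) - 1 / q = (q - 1) / q by field_simp]
        rw [inv_div]
        field_simp

private lemma aux_le {M : ℕ} {q : ℝ} (hq1 : 1 < q) (g : ℕ → ℕ) (hg : ∀ i, g i ≤ M) :
    (∑' i : ℕ, (g i : ℝ) / q ^ (i + 1)) ≤ M / (q - 1) := by
  have hq0 : (0:ℝ) < q := lt_trans one_pos hq1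
  rw [← aux_geom hq1 M]
  refine Summable.tsum_le_tsum (fun i => ?_) (aux_summable hq1 g hg)
    (aux_summable hq1 (fun _ => M) (fun _ => le_rfl))
  have h1 : (g i : ℝ) ≤ M := by exact_mod_cast hg i
  gcongr

private lemma aux_split {M : ℕ} {q : ℝ} (hq1 : 1 < q) (g : ℕ → ℕ) (hg : ∀ i, g i ≤ M)
    (k : ℕ) :
    (∑' i : ℕ, (g i : ℝ) / q ^ (i + 1)) =
      (∑ i ∈ Finset.range k, (g i : ℝ) / q ^ (i + 1)) +
        (q ^ k)⁻¹ * ∑' i : ℕ, (g (k + i) : ℝ) / q ^ (i + 1) := by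
  have hq0 : (0:ℝ) < q := lt_trans one_pos hq1
  have hs := aux_summable (M := M) hq1 g hg
  rw [← Summable.sum_add_tsum_nat_add k hs]
  congr 1
  have h2 : ∀ i : ℕ, (g (i + k) : ℝ) / q ^ (i + k + 1) =
      (q ^ k)⁻¹ * ((g (k + i) : ℝ) / q ^ (i + 1)) := by
    intro i
    rw [add_comm i k, show k + i + 1 = k + (i + 1) from by omega, pow_add]
    field_simp
  rw [tsum_congr h2, tsum_mul_left]

private lemma aux_tail_pos {M : ℕ} {q : ℝ} (hq1 : 1 < q) (α : ℕ → ℕ)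
    (hαM : ∀ i, α i ≤ M) (hα0 : ∀ N, ∃ n ≥ N, α n ≠ 0) (k : ℕ) :
    0 < ∑' i : ℕ, (α (k + i) : ℝ) / q ^ (i + 1) := by
  have hq0 : (0:ℝ) < q := lt_trans one_pos hq1
  obtain ⟨n, hn, hne⟩ := hα0 k
  have hs := aux_summable (M := M) hq1 (fun i => α (k + i)) (fun i => hαM _)
  have hterm : 0 < (α (k + (n - k)) : ℝ) / q ^ ((n - k) + 1) := by
    rw [show k + (n - k) = n from by omega]
    have h1 : (0:ℝ) < α n := by
      exact_mod_cast Nat.pos_of_ne_zero hne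
    exact div_pos h1 (by positivity)
  exact lt_of_lt_of_le hterm (Summable.le_tsum hs _ (fun j _ => by positivity))

private lemma aux_step {M : ℕ} {q : ℝ} (hq1 : 1 < q)
    (α : ℕ → ℕ) (hαM : ∀ i, α i ≤ M)
    (hαsum : (∑' i : ℕ, (α i : ℝ) / q ^ (i + 1)) = 1)
    (g : ℕ → ℕ) (hg : ∀ i, g i ≤ M)
    (m : ℕ) (hpre : ∀ i < m, g i = α i) (hm : g m < α m)
    (δ : ℝ) (hδ : 0 ≤ δ) (hV : 1 + δ ≤ ∑' i : ℕ, (g i : ℝ) / q ^ (i + 1)) :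
    1 + q * δ + (∑' i : ℕ, (α (m + 1 + i) : ℝ) / q ^ (i + 1)) ≤
      ∑' i : ℕ, (g (m + 1 + i) : ℝ) / q ^ (i + 1) := by
  have hq0 : (0:ℝ) < q := lt_trans one_pos hq1
  have hu : (0:ℝ) < q ^ (m + 1) := by positivity
  set u : ℝ := q ^ (m + 1) with hu_def
  set Tg : ℝ := ∑' i : ℕ, (g (m + 1 + i) : ℝ) / q ^ (i + 1) with hTg
  set Tα : ℝ := ∑' i : ℕ, (α (m + 1 + i) : ℝ) / q ^ (i + 1) with hTα
  have hsg := aux_split (M := M) hq1 g hg (m + 1)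
  have hsa := aux_split (M := M) hq1 α hαM (m + 1)
  rw [hαsum] at hsa
  -- prefix comparison
  have hpref : (∑ i ∈ Finset.range (m + 1), (g i : ℝ) / q ^ (i + 1)) ≤
      (∑ i ∈ Finset.range (m + 1), (α i : ℝ) / q ^ (i + 1)) - u⁻¹ := by
    rw [Finset.sum_range_succ, Finset.sum_range_succ]
    have heq : (∑ i ∈ Finset.range m, (g i : ℝ) / q ^ (i + 1)) =
        ∑ i ∈ Finset.range m, (α i : ℝ) / q ^ (i + 1) :=
      Finset.sum_congr rfl (fun i hi => by rw [hpre i (Finset.mem_range.mp hi)])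
    have hcast : (g m : ℝ) + 1 ≤ α m := by exact_mod_cast hm
    have h3 : (g m : ℝ) / u ≤ (α m : ℝ) / u - 1 / u := by
      rw [div_sub_div_same]
      gcongr
      linarith
    rw [heq, inv_eq_one_div]
    linarith
  -- combine
  have h4 : δ + u⁻¹ + u⁻¹ * Tα ≤ u⁻¹ * Tg := by
    rw [hsg] at hV
    linarith
  have h5 : u * (δ + u⁻¹ + u⁻¹ * Tα) ≤ u * (u⁻¹ * Tg) :=
    mul_le_mul_of_nonneg_left h4 hu.le
  have h6 : u * u⁻¹ = 1 := mul_inv_cancel₀ (ne_of_gt hu)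
  rw [mul_add, mul_add, ← mul_assoc, ← mul_assoc, h6, one_mul, one_mul] at h5
  have h7 : q * δ ≤ u * δ := by
    have hqu : q ≤ u := by
      rw [hu_def]
      calc q = q ^ 1 := (pow_one q).symm
        _ ≤ q ^ (m + 1) := pow_le_pow_right₀ hq1.le (Nat.succ_le_succ (Nat.zero_le m))
    exact mul_le_mul_of_nonneg_right hqu hδ
  linarith

private lemma aux_core {M : ℕ} {q : ℝ} (hq1 : 1 < q)
    (α : ℕ → ℕ) (hαM : ∀ i, α i ≤ M) (hα0 : ∀ N, ∃ n ≥ N, α n ≠ 0)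
    (hαsum : (∑' i : ℕ, (α i : ℝ) / q ^ (i + 1)) = 1)
    (c : ℕ → ℕ) (hc : ∀ i, c i ≤ M)
    (h2 : ∀ n, 0 < c n → lexLT (fun i => M - c (n + 1 + i)) α)
    (p : ℕ) (hp : 0 < c p) :
    (∑' i : ℕ, ((M - c (p + 1 + i) : ℕ) : ℝ) / q ^ (i + 1)) < 1 := by
  have hq0 : (0:ℝ) < q := lt_trans one_pos hq1
  by_contra hge
  push_neg at hge
  -- step
  have hstep : ∀ p : ℕ, 0 < c p → ∀ δ : ℝ, 0 ≤ δ →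
      1 + δ ≤ (∑' i : ℕ, ((M - c (p + 1 + i) : ℕ) : ℝ) / q ^ (i + 1)) →
      ∃ p', 0 < c p' ∧ ∃ T : ℝ, 0 < T ∧
        1 + q * δ + T ≤ ∑' i : ℕ, ((M - c (p' + 1 + i) : ℕ) : ℝ) / q ^ (i + 1) := by
    intro p hp δ hδ hV
    obtain ⟨m, hpre, hm⟩ := h2 p hp
    have hg : ∀ i, (M - c (p + 1 + i) : ℕ) ≤ M := fun i => Nat.sub_le _ _
    have hkey := aux_step hq1 α hαM hαsum (fun i => M - c (p + 1 + i)) hg m hpre hm δ hδ hV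
    refine ⟨p + m + 1, ?_, ∑' i : ℕ, (α (m + 1 + i) : ℝ) / q ^ (i + 1),
      aux_tail_pos hq1 α hαM hα0 (m + 1), ?_⟩
    · have h1 := hαM m
      have h2' : M - c (p + 1 + m) < α m := hm
      rw [show p + m + 1 = p + 1 + m from by omega]
      omega
    · have hre : (∑' i : ℕ, ((M - c (p + m + 1 + 1 + i) : ℕ) : ℝ) / q ^ (i + 1)) =
          ∑' i : ℕ, ((M - c (p + 1 + (m + 1 + i)) : ℕ) : ℝ) / q ^ (i + 1) :=
        tsum_congr (fun i => by rw [show p + m + 1 + 1 + i = p + 1 + (m + 1 + i) from by omega])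
      rw [hre]
      exact hkey
  obtain ⟨p₁, hp₁, T₁, hT₁, hV₁⟩ := hstep p hp 0 le_rfl (by linarith)
  have hiter : ∀ k : ℕ, ∃ p', 0 < c p' ∧
      1 + q ^ k * T₁ ≤ ∑' i : ℕ, ((M - c (p' + 1 + i) : ℕ) : ℝ) / q ^ (i + 1) := by
    intro k
    induction k with
    | zero => exact ⟨p₁, hp₁, by rw [pow_zero, one_mul]; linarith⟩
    | succ k ih =>
      obtain ⟨p', hp', hV'⟩ := ih
      have hδ : 0 ≤ q ^ k * T₁ := by positivity
      obtain ⟨p'', hp'', T', hT', hV''⟩ := hstep p' hp' _ hδ hV'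
      refine ⟨p'', hp'', ?_⟩
      have hring : q * (q ^ k * T₁) = q ^ (k + 1) * T₁ := by ring
      linarith
  obtain ⟨k, hk⟩ := pow_unbounded_of_one_lt (((M : ℝ) / (q - 1)) / T₁) hq1
  obtain ⟨p', hp', hV'⟩ := hiter k
  have hub : (∑' i : ℕ, ((M - c (p' + 1 + i) : ℕ) : ℝ) / q ^ (i + 1)) ≤ M / (q - 1) :=
    aux_le hq1 _ (fun i => Nat.sub_le _ _)
  have hlt : (M : ℝ) / (q - 1) < q ^ k * T₁ := by
    rw [div_lt_iff₀ hT₁] at hk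
    linarith
  linarith

theorem stmt17 (M : ℕ) (hM : 0 < M) (q : ℝ) (hq1 : 1 < q) (hq2 : q ≤ M + 1)
    (α : ℕ → ℕ) (hαM : ∀ i, α i ≤ M)
    (hα0 : ∀ N, ∃ n ≥ N, α n ≠ 0)
    (hαsum : (∑' i : ℕ, (α i : ℝ) / q ^ (i + 1)) = 1)
    (hαmax : ∀ β : ℕ → ℕ, (∀ i, β i ≤ M) → (∀ N, ∃ n ≥ N, β n ≠ 0) →
      (∑' i : ℕ, (β i : ℝ) / q ^ (i + 1)) = 1 → lexLE β α)
    (c : ℕ → ℕ) (hc : ∀ i, c i ≤ M)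
    (h1 : ∀ n, c n < M → lexLT (fun i => c (n + 1 + i)) α)
    (h2 : ∀ n, 0 < c n → lexLT (fun i => M - c (n + 1 + i)) α) :
    ∀ d : ℕ → ℕ, (∀ i, d i ≤ M) →
      (∑' i : ℕ, (d i : ℝ) / q ^ (i + 1)) = (∑' i : ℕ, (c i : ℝ) / q ^ (i + 1)) →
      d = c := by
  intro d hd hsum
  have hq0 : (0:ℝ) < q := lt_trans one_pos hq1
  by_contra hne
  have hex : ∃ n, d n ≠ c n := by
    by_contra h
    push_neg at h
    exact hne (funext h)
  classical
  set n := Nat.find hex with hn_def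
  have hn : d n ≠ c n := Nat.find_spec hex
  have hmin : ∀ m < n, d m = c m := fun m hm => not_not.mp (Nat.find_min hex hm)
  have hu : (0:ℝ) < q ^ (n + 1) := by positivity
  set Td : ℝ := ∑' i : ℕ, (d (n + 1 + i) : ℝ) / q ^ (i + 1) with hTd
  set Tc : ℝ := ∑' i : ℕ, (c (n + 1 + i) : ℝ) / q ^ (i + 1) with hTc
  have hd_split := aux_split (M := M) hq1 d hd (n + 1)
  have hc_split := aux_split (M := M) hq1 c hc (n + 1)
  have hpr : (∑ i ∈ Finset.range (n + 1), (d i : ℝ) / q ^ (i + 1)) -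
      (∑ i ∈ Finset.range (n + 1), (c i : ℝ) / q ^ (i + 1)) =
      ((d n : ℝ) - (c n : ℝ)) / q ^ (n + 1) := by
    rw [Finset.sum_range_succ, Finset.sum_range_succ,
      Finset.sum_congr rfl (fun i hi => by rw [hmin i (Finset.mem_range.mp hi)])]
    ring
  have hkey : (d n : ℝ) - c n = Tc - Td := by
    have h := hsum
    rw [hd_split, hc_split] at h
    have h4 : ((d n : ℝ) - c n) * (q ^ (n + 1))⁻¹ =
        (q ^ (n + 1))⁻¹ * Tc - (q ^ (n + 1))⁻¹ * Td := by
      rw [div_eq_mul_inv] at hpr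
      linarith
    have h5 : ((d n : ℝ) - c n) * (q ^ (n + 1))⁻¹ * q ^ (n + 1) =
        ((q ^ (n + 1))⁻¹ * Tc - (q ^ (n + 1))⁻¹ * Td) * q ^ (n + 1) := by rw [h4]
    have h6 : (q ^ (n + 1))⁻¹ * q ^ (n + 1) = 1 := inv_mul_cancel₀ (ne_of_gt hu)
    calc (d n : ℝ) - c n
        = ((d n : ℝ) - c n) * ((q ^ (n + 1))⁻¹ * q ^ (n + 1)) := by rw [h6, mul_one]
      _ = ((q ^ (n + 1))⁻¹ * Tc - (q ^ (n + 1))⁻¹ * Td) * q ^ (n + 1) := by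
          rw [← mul_assoc]; exact h5
      _ = ((q ^ (n + 1))⁻¹ * q ^ (n + 1)) * Tc - ((q ^ (n + 1))⁻¹ * q ^ (n + 1)) * Td := by
          ring
      _ = Tc - Td := by rw [h6, one_mul, one_mul]
  rcases lt_or_gt_of_ne hn with hn' | hn'
  · -- d n < c n
    have hcn : 0 < c n := by omega
    have hcore := aux_core hq1 α hαM hα0 hαsum c hc h2 n hcn
    set TMc : ℝ := ∑' i : ℕ, ((M - c (n + 1 + i) : ℕ) : ℝ) / q ^ (i + 1) with hTMc
    have hTd_le : Td ≤ ∑' i : ℕ, (M : ℝ) / q ^ (i + 1) := by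
      refine Summable.tsum_le_tsum (fun i => ?_) (aux_summable hq1 _ (fun i => hd _))
        (aux_summable hq1 (fun _ => M) (fun _ => le_rfl))
      have hcast : (d (n + 1 + i) : ℝ) ≤ M := by exact_mod_cast hd _
      gcongr
    have hsplit2 : Tc + TMc = ∑' i : ℕ, (M : ℝ) / q ^ (i + 1) := by
      rw [hTc, hTMc, ← Summable.tsum_add (aux_summable hq1 _ (fun i => hc _))
        (aux_summable hq1 _ (fun i => Nat.sub_le _ _))]
      refine tsum_congr fun i => ?_
      rw [Nat.cast_sub (hc _)]
      ring
    have hcast : (d n : ℝ) + 1 ≤ c n := by exact_mod_cast hn'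
    linarith
  · -- c n < d n
    have hcM : c n < M := lt_of_lt_of_le hn' (hd n)
    have h2' : ∀ m, 0 < (fun i => M - c i) m →
        lexLT (fun i => M - ((fun i => M - c i) (m + 1 + i))) α := by
      intro m hm
      have hcm : c m < M := by simp only [] at hm; omega
      obtain ⟨k, hk1, hk2⟩ := h1 m hcm
      refine ⟨k, fun i hi => ?_, ?_⟩
      · have ha := hk1 i hi
        have hb := hc (m + 1 + i)
        simp only [] at ha ⊢
        omega
      · have ha : c (m + 1 + k) < α k := hk2
        have hb := hc (m + 1 + k)
        simp only []
        omega
    have hc' : ∀ i, (fun i => M - c i) i ≤ M := fun i => Nat.sub_le _ _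
    have hc'n : 0 < (fun i => M - c i) n := by simp only []; omega
    have hcore := aux_core hq1 α hαM hα0 hαsum (fun i => M - c i) hc' h2' n hc'n
    have h7 : (∑' i : ℕ, ((M - (fun i => M - c i) (n + 1 + i) : ℕ) : ℝ) / q ^ (i + 1)) = Tc := by
      refine tsum_congr fun i => ?_
      simp only []
      rw [Nat.sub_sub_self (hc _)]
    rw [h7] at hcore
    have hTd0 : 0 ≤ Td := tsum_nonneg (fun i => by positivity)
    have hcast : (c n : ℝ) + 1 ≤ d n := by exact_mod_cast hn'
    linarith
end

section
/- Let M be a positive integer and 1 < q < M+1, and let α(q) be the quasi-greedy expansion of 1 in base q. Suppose x ∈ [0, M/(q-1)] is such that its quasi-greedy expansion (a_i) in base q satisfies a_{n+1}a_{n+2}⋯ ≤ α(q) for all n ≥ 0 and (M-a_{n+1})(M-a_{n+2})⋯ ≤ α(q) for all n ≥ 0. Then x lies in the interval [M/(q-1) - 1, 1]. Conversely, if x ∈ [M/(q-1) - 1, 1] and the quasi-greedy expansion (a_i) of x satisfies a_{n+1}a_{n+2}⋯ ≤ α(q) whenever a_n < M and (M-a_{n+1})(M-a_{n+2})⋯ ≤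 α(q) whenever a_n > 0, then in fact a_{n+1}a_{n+2}⋯ ≤ α(q) and (M-a_{n+1})(M-a_{n+2})⋯ ≤ α(q) hold for all n ≥ 0. -/
noncomputable def qgVal (q : ℝ) (c : ℕ → ℕ) : ℝ := ∑' i : ℕ, (c i : ℝ) / q ^ (i + 1)

section
variable {M : ℕ} {q : ℝ}

lemma qg_summable (hq1 : 1 < q) {c : ℕ → ℕ} (hc : ∀ i, c i ≤ M) :
    Summable (fun i : ℕ => (c i : ℝ) / q ^ (i + 1)) := by
  have hq0 : 0 < q := by linarith
  have hgeo : Summable (fun i : ℕ => (M : ℝ) * (1 / q) ^ (i + 1)) := by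
    have h := (summable_geometric_of_lt_one (by positivity)
      (by rw [div_lt_one hq0]; exact hq1) : Summable (fun i : ℕ => (1 / q : ℝ) ^ i))
    exact ((h.mul_left ((M : ℝ) * (1 / q))).congr (fun i => by rw [pow_succ]; ring))
  refine Summable.of_nonneg_of_le (fun i => by positivity) (fun i => ?_) hgeo
  have : ((M : ℝ)) * (1 / q) ^ (i + 1) = (M : ℝ) / q ^ (i + 1) := by
    rw [div_pow, one_pow]; ring
  rw [this]
  gcongr
  exact_mod_cast hc i

lemma qg_tsum_constM (hq1 : 1 < q) : (∑' i : ℕ, (M : ℝ) / q ^ (i + 1)) = M / (q - 1) := by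
  have hq0 : 0 < q := by linarith
  have h1 : ∀ i : ℕ, (M : ℝ) / q ^ (i + 1) = ((M : ℝ) / q) * (1 / q) ^ i := by
    intro i; rw [div_pow, one_pow, pow_succ]; field_simp
  rw [tsum_congr h1, tsum_mul_left, tsum_geometric_of_lt_one (by positivity)
    (by rw [div_lt_one hq0]; exact hq1)]
  rw [one_div]
  rw [show (1 - q⁻¹)⁻¹ = q / (q-1) by rw [inv_eq_one_div]; field_simp]
  field_simp

lemma qg_val_nonneg (hq1 : 1 < q) (c : ℕ → ℕ) : 0 ≤ qgVal q c :=
  tsum_nonneg (fun i => by positivity)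

lemma qg_val_le (hq1 : 1 < q) {c : ℕ → ℕ} (hc : ∀ i, c i ≤ M) :
    qgVal q c ≤ M / (q - 1) := by
  rw [← qg_tsum_constM (M := M) hq1]
  refine Summable.tsum_le_tsum (fun i => ?_) (qg_summable hq1 hc) (qg_summable hq1 (fun i => le_refl M))
  gcongr
  exact_mod_cast hc i

lemma qg_val_congr {b c : ℕ → ℕ} (h : ∀ i, b i = c i) : qgVal q b = qgVal q c :=
  tsum_congr (fun i => by rw [h i])

lemma qg_val_step (hq1 : 1 < q) {c : ℕ → ℕ} (hc : ∀ i, c i ≤ M) :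
    qgVal q c = (c 0 : ℝ) / q + qgVal q (fun i => c (1 + i)) / q := by
  have hs := qg_summable hq1 hc
  have h0 := Summable.tsum_eq_zero_add hs
  rw [qgVal, h0]
  have h1 : ∀ i : ℕ, ((c (i + 1) : ℝ)) / q ^ (i + 1 + 1) = (1 / q) * ((c (1 + i) : ℝ) / q ^ (i + 1)) := by
    intro i
    rw [show 1 + i = i + 1 by omega, pow_succ]
    field_simp
  rw [tsum_congr h1, tsum_mul_left]
  simp [qgVal]
  ring

lemma qg_val_split (hq1 : 1 < q) {c : ℕ → ℕ} (hc : ∀ i, c i ≤ M) (k : ℕ) :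
    qgVal q c = (∑ i ∈ Finset.range k, (c i : ℝ) / q ^ (i + 1))
      + qgVal q (fun i => c (k + i)) / q ^ k := by
  have hq0 : 0 < q := by linarith
  induction k with
  | zero =>
    have : qgVal q (fun i => c (0 + i)) = qgVal q c :=
      qg_val_congr (fun i => congrArg c (by omega))
    simp [this]
  | succ k ih =>
    rw [ih, Finset.sum_range_succ]
    have hstep := qg_val_step (M := M) hq1 (c := fun i => c (k + i)) (fun i => hc _)
    have h1 : qgVal q (fun i => (fun j => c (k + j)) (1 + i)) = qgVal q (fun i => c (k + 1 + i)) :=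
      qg_val_congr (fun i => congrArg c (by omega))
    rw [h1] at hstep
    rw [hstep]
    have : ((fun j => c (k + j)) 0 : ℝ) = (c k : ℝ) := by norm_num
    rw [this, pow_succ]
    have hk0 : (q : ℝ) ^ k ≠ 0 := by positivity
    field_simp
    ring

lemma qg_val_diff (hq1 : 1 < q) {b c : ℕ → ℕ} (hb : ∀ i, b i ≤ M) (hc : ∀ i, c i ≤ M)
    (k : ℕ) (hag : ∀ i < k, b i = c i) :
    qgVal q b - qgVal q c = ((b k : ℝ) - (c k : ℝ)) / q ^ (k + 1)
      + (qgVal q (fun i => b (k + 1 + i)) - qgVal q (fun i => c (k + 1 + i))) / q ^ (k + 1) := by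
  rw [qg_val_split (M := M) hq1 hb (k + 1), qg_val_split (M := M) hq1 hc (k + 1)]
  rw [Finset.sum_range_succ, Finset.sum_range_succ]
  rw [Finset.sum_congr rfl (fun i hi => by rw [hag i (Finset.mem_range.mp hi)])]
  ring

lemma qg_val_reflect (hq1 : 1 < q) {b : ℕ → ℕ} (hb : ∀ i, b i ≤ M) :
    qgVal q (fun i => M - b i) = M / (q - 1) - qgVal q b := by
  have h1 : ∀ i : ℕ, ((M - b i : ℕ) : ℝ) / q ^ (i + 1)
      = (M : ℝ) / q ^ (i + 1) - (b i : ℝ) / q ^ (i + 1) := by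
    intro i
    rw [Nat.cast_sub (hb i)]
    ring
  rw [qgVal, tsum_congr h1, Summable.tsum_sub (qg_summable hq1 (fun i => le_refl M)) (qg_summable hq1 hb),
    qg_tsum_constM hq1]
  rfl

lemma qg_geo (hq1 : 1 < q) : ∀ n : ℕ, (∑ i ∈ Finset.range n, (M : ℝ) / q ^ (i + 1))
    = M / (q - 1) - (M / (q - 1)) / q ^ n := by
  have hq0 : 0 < q := by linarith
  have hq1' : q - 1 ≠ 0 := by intro h; linarith [h]
  intro n
  induction n with
  | zero => simp
  | succ n ih =>
    rw [Finset.sum_range_succ, ih, pow_succ]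
    have hk0 : (q : ℝ) ^ n ≠ 0 := by positivity
    field_simp
    ring

lemma qg_lex_total (b c : ℕ → ℕ) :
    lexLE b c ∨ ∃ k, (∀ i < k, b i = c i) ∧ c k < b k := by
  by_cases h : b = c
  · exact Or.inl (Or.inl h)
  · have hne : ∃ m, b m ≠ c m := Function.ne_iff.mp h
    classical
    have hk : b (Nat.find hne) ≠ c (Nat.find hne) := Nat.find_spec hne
    have hag : ∀ i < Nat.find hne, b i = c i := fun i hi => by
      by_contra hci
      exact absurd (Nat.find_le hci) (not_le.mpr hi)
    rcases lt_or_gt_of_ne hk with h1 | h1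
    · exact Or.inl (Or.inr ⟨Nat.find hne, hag, h1⟩)
    · exact Or.inr ⟨Nat.find hne, hag, h1⟩

noncomputable def qgGr (M : ℕ) (q w : ℝ) : ℕ → ℝ
  | 0 => w
  | n + 1 => q * qgGr M q w n - ((min M (⌈q * qgGr M q w n⌉ - 1).toNat : ℕ) : ℝ)

noncomputable def qgGd (M : ℕ) (q w : ℝ) (n : ℕ) : ℕ := min M (⌈q * qgGr M q w n⌉ - 1).toNat

lemma qgGr_succ (M : ℕ) (q w : ℝ) (n : ℕ) :
    qgGr M q w (n + 1) = q * qgGr M q w n - (qgGd M q w n : ℝ) := rfl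

lemma qgGd_le (M : ℕ) (q w : ℝ) (n : ℕ) : qgGd M q w n ≤ M := min_le_left _ _

lemma qg_gr_mem (hM : 0 < M) (hq1 : 1 < q) (hq2 : q < M + 1) {w : ℝ}
    (hw0 : 0 < w) (hw2 : w ≤ M / (q - 1)) :
    ∀ n, 0 < qgGr M q w n ∧ qgGr M q w n ≤ M / (q - 1) := by
  have hq0 : 0 < q := by linarith
  have hD1 : (1 : ℝ) < M / (q - 1) := by
    rw [lt_div_iff₀ (by linarith)]
    linarith
  intro n
  induction n with
  | zero => exact ⟨hw0, hw2⟩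
  | succ n ih =>
    obtain ⟨hr0, hr2⟩ := ih
    set r := qgGr M q w n with hr
    have ht0 : 0 < q * r := by positivity
    have hce : (1 : ℤ) ≤ ⌈q * r⌉ := Int.ceil_pos.mpr ht0
    have hcast : ((⌈q * r⌉ - 1).toNat : ℝ) = (⌈q * r⌉ : ℝ) - 1 := by
      have h : ((⌈q * r⌉ - 1).toNat : ℤ) = ⌈q * r⌉ - 1 := Int.toNat_of_nonneg (by omega)
      have h2 := congrArg (fun z : ℤ => (z : ℝ)) h
      push_cast at h2
      exact h2
    have hgdle : ((qgGd M q w n : ℕ) : ℝ) ≤ (⌈q * r⌉ : ℝ) - 1 := by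
      rw [← hcast]
      exact_mod_cast min_le_right M _
    have hlt : (⌈q * r⌉ : ℝ) - 1 < q * r := by
      have := Int.ceil_lt_add_one (q * r)
      push_cast at this ⊢
      linarith
    constructor
    · rw [qgGr_succ]
      have : (qgGd M q w n : ℝ) < q * r := lt_of_le_of_lt hgdle hlt
      linarith
    · rw [qgGr_succ]
      by_cases hcase : (⌈q * r⌉ - 1).toNat ≤ M
      · have : qgGd M q w n = (⌈q * r⌉ - 1).toNat := min_eq_right hcase
        rw [this, hcast]
        have : q * r ≤ (⌈q * r⌉ : ℝ) := Int.le_ceil _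
        linarith
      · have : qgGd M q w n = M := min_eq_left (le_of_not_ge hcase)
        rw [this]
        have h1 : q * r ≤ q * (M / (q - 1)) := by
          exact mul_le_mul_of_nonneg_left hr2 (le_of_lt hq0)
        have hne : q - 1 ≠ 0 := by intro h; rw [sub_eq_zero] at h; linarith
        have h2 : q * ((M : ℝ) / (q - 1)) - M = M / (q - 1) := by
          linear_combination (div_mul_cancel₀ (M : ℝ) hne)
        linarith

lemma qg_gd_partial (hM : 0 < M) (hq1 : 1 < q) (hq2 : q < M + 1) {w : ℝ}
    (hw0 : 0 < w) (hw2 : w ≤ M / (q - 1)) :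
    ∀ n, (∑ i ∈ Finset.range n, (qgGd M q w i : ℝ) / q ^ (i + 1)) = w - qgGr M q w n / q ^ n := by
  have hq0 : 0 < q := by linarith
  intro n
  induction n with
  | zero => simp [qgGr]
  | succ n ih =>
    rw [Finset.sum_range_succ, ih, qgGr_succ, pow_succ]
    have hk0 : (q : ℝ) ^ n ≠ 0 := by positivity
    field_simp
    ring

lemma qg_gd_val (hM : 0 < M) (hq1 : 1 < q) (hq2 : q < M + 1) {w : ℝ}
    (hw0 : 0 < w) (hw2 : w ≤ M / (q - 1)) :
    qgVal q (qgGd M q w) = w := by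
  have hq0 : 0 < q := by linarith
  have hs := qg_summable (M := M) hq1 (qgGd_le M q w)
  have h1 : Filter.Tendsto (fun n => ∑ i ∈ Finset.range n, (qgGd M q w i : ℝ) / q ^ (i + 1))
      Filter.atTop (nhds (qgVal q (qgGd M q w))) := hs.hasSum.tendsto_sum_nat
  have h2 : Filter.Tendsto (fun n => ∑ i ∈ Finset.range n, (qgGd M q w i : ℝ) / q ^ (i + 1))
      Filter.atTop (nhds (w - 0)) := by
    have heq : ∀ n : ℕ, ∑ i ∈ Finset.range n, (qgGd M q w i : ℝ) / q ^ (i + 1)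
        = w - qgGr M q w n / q ^ n := qg_gd_partial hM hq1 hq2 hw0 hw2
    rw [show (fun n => ∑ i ∈ Finset.range n, (qgGd M q w i : ℝ) / q ^ (i + 1))
      = (fun n => w - qgGr M q w n / q ^ n) from funext heq]
    refine Filter.Tendsto.const_sub _ ?_
    have hsq : Filter.Tendsto (fun n : ℕ => (M / (q - 1) : ℝ) * (1 / q) ^ n)
        Filter.atTop (nhds 0) := by
      rw [show (0:ℝ) = (M / (q-1) : ℝ) * 0 by ring]
      exact (tendsto_pow_atTop_nhds_zero_of_lt_one (by positivity)
        (by rw [div_lt_one hq0]; exact hq1)).const_mul _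
    refine squeeze_zero (fun n => ?_) (fun n => ?_) hsq
    · exact div_nonneg (qg_gr_mem hM hq1 hq2 hw0 hw2 n).1.le (by positivity)
    · have h := (qg_gr_mem hM hq1 hq2 hw0 hw2 n).2
      have hrw : (M / (q - 1) : ℝ) * (1 / q) ^ n = (M / (q - 1)) / q ^ n := by
        rw [div_pow, one_pow, mul_one_div]
      rw [hrw]
      gcongr
  have := tendsto_nhds_unique h1 h2
  rw [this]; ring

lemma qg_gd_infnonzero (hM : 0 < M) (hq1 : 1 < q) (hq2 : q < M + 1) {w : ℝ}
    (hw0 : 0 < w) (hw2 : w ≤ M / (q - 1)) :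
    ∀ N, ∃ n ≥ N, qgGd M q w n ≠ 0 := by
  have hq0 : 0 < q := by linarith
  by_contra h
  push_neg at h
  obtain ⟨N, hN⟩ := h
  have hgrow : ∀ j : ℕ, qgGr M q w (N + j) = q ^ j * qgGr M q w N := by
    intro j
    induction j with
    | zero => simp
    | succ j ih =>
      rw [show N + (j + 1) = (N + j) + 1 by omega, qgGr_succ, hN (N + j) (by omega), ih, pow_succ]
      push_cast
      ring
  obtain ⟨j, hj⟩ := pow_unbounded_of_one_lt ((M / (q - 1)) / qgGr M q w N) hq1
  have hgr0 := (qg_gr_mem hM hq1 hq2 hw0 hw2 N).1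
  have h2 : (M / (q - 1) : ℝ) < q ^ j * qgGr M q w N := by
    rw [div_lt_iff₀ hgr0] at hj
    linarith
  have h3 := (qg_gr_mem hM hq1 hq2 hw0 hw2 (N + j)).2
  rw [hgrow j] at h3
  linarith

lemma qg_QG (hM : 0 < M) (hq1 : 1 < q) (hq2 : q < M + 1) {α : ℕ → ℕ} (hαM : ∀ i, α i ≤ M)
    (hαsum : qgVal q α = 1)
    (hαmax : ∀ β : ℕ → ℕ, (∀ i, β i ≤ M) → (∀ N, ∃ n ≥ N, β n ≠ 0) →
      qgVal q β = 1 → lexLE β α) :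
    ∀ k, α k < M → qgVal q (fun i => α (k + 1 + i)) ≤ 1 := by
  have hq0 : 0 < q := by linarith
  intro k hk
  by_contra hV
  push_neg at hV
  set V := qgVal q (fun i => α (k + 1 + i)) with hVdef
  have hVle : V ≤ M / (q - 1) := qg_val_le hq1 (fun i => hαM _)
  set w := V - 1 with hwdef
  have hw0 : 0 < w := by linarith
  have hw2 : w ≤ M / (q - 1) := by
    have : (0:ℝ) ≤ M / (q-1) := div_nonneg (Nat.cast_nonneg M) (by linarith)
    linarith
  classical
  set β : ℕ → ℕ := fun i => if i < k then α i else if i = k then α k + 1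
    else qgGd M q w (i - (k + 1)) with hβdef
  have hβM : ∀ i, β i ≤ M := by
    intro i
    simp only [hβdef]
    split
    · exact hαM i
    · split
      · omega
      · exact qgGd_le M q w _
  have hβ0 : ∀ N, ∃ n ≥ N, β n ≠ 0 := by
    intro N
    obtain ⟨m, hm, hmne⟩ := qg_gd_infnonzero hM hq1 hq2 hw0 hw2 N
    refine ⟨m + (k + 1), by omega, ?_⟩
    simp only [hβdef]
    rw [if_neg (by omega), if_neg (by omega)]
    rwa [show m + (k + 1) - (k + 1) = m by omega]
  have hβtail : qgVal q (fun i => β (k + 1 + i)) = w := by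
    rw [qg_val_congr (c := qgGd M q w) (fun i => by
      simp only [hβdef]
      rw [if_neg (by omega), if_neg (by omega), show k + 1 + i - (k + 1) = i by omega])]
    exact qg_gd_val hM hq1 hq2 hw0 hw2
  have hβval : qgVal q β = 1 := by
    have hsβ := qg_val_split (M := M) hq1 hβM (k + 1)
    have hsα := qg_val_split (M := M) hq1 hαM (k + 1)
    rw [Finset.sum_range_succ] at hsβ hsα
    have hag : ∑ i ∈ Finset.range k, (β i : ℝ) / q ^ (i + 1)
        = ∑ i ∈ Finset.range k, (α i : ℝ) / q ^ (i + 1) := by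
      refine Finset.sum_congr rfl (fun i hi => ?_)
      have : β i = α i := by simp only [hβdef]; rw [if_pos (Finset.mem_range.mp hi)]
      rw [this]
    have hβk : (β k : ℝ) = (α k : ℝ) + 1 := by
      have : β k = α k + 1 := by simp [hβdef]
      rw [this]; push_cast; ring
    rw [hβtail] at hsβ
    rw [hαsum] at hsα
    rw [hsβ, hag, hβk]
    rw [show qgVal q (fun i => α (k + 1 + i)) = V from rfl] at hsα
    have hqk : (q : ℝ) ^ (k + 1) ≠ 0 := by positivity
    have : w / q ^ (k+1) = V / q^(k+1) - 1 / q^(k+1) := by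
      rw [hwdef]; ring
    rw [this, add_div]
    linarith [hsα]
  have hlex := hαmax β hβM hβ0 hβval
  rcases hlex with heq | ⟨m, hag, hlt⟩
  · have := congrFun heq k
    simp [hβdef] at this
  · rcases lt_trichotomy m k with h1 | h1 | h1
    · have : β m = α m := by simp only [hβdef]; rw [if_pos h1]
      omega
    · have hβm : β m = α k + 1 := by simp only [hβdef]; rw [if_neg (by omega), if_pos h1]
      rw [hβm, h1] at hlt
      omega
    · have := hag k h1
      simp [hβdef] at this

lemma qg_val_constM (hq1 : 1 < q) : qgVal q (fun _ : ℕ => M) = M / (q - 1) :=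
  qg_tsum_constM hq1

lemma qg_notallM (hM : 0 < M) (hq1 : 1 < q) (hq2 : q < M + 1) {α : ℕ → ℕ} (hαM : ∀ i, α i ≤ M)
    (hαsum : qgVal q α = 1)
    (hαmax : ∀ β : ℕ → ℕ, (∀ i, β i ≤ M) → (∀ N, ∃ n ≥ N, β n ≠ 0) →
      qgVal q β = 1 → lexLE β α) :
    ∀ k, ∃ j, k ≤ j ∧ α j < M := by
  have hq0 : 0 < q := by linarith
  have hD1 : (1 : ℝ) < M / (q - 1) := by
    rw [lt_div_iff₀ (by linarith)]
    linarith
  have key : ∀ k, ¬(∀ j, k ≤ j → α j = M) := by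
    intro k
    induction k with
    | zero =>
      intro h
      have : qgVal q α = qgVal q (fun _ : ℕ => M) := qg_val_congr (fun i => h i (Nat.zero_le i))
      rw [hαsum, qg_val_constM hq1] at this
      linarith
    | succ k ih =>
      intro h
      by_cases hαk : α k = M
      · exact ih (fun j hj => by rcases Nat.eq_or_lt_of_le hj with h1 | h1
                                 · rw [← h1]; exact hαk
                                 · exact h j h1)
      · have hlt : α k < M := lt_of_le_of_ne (hαM k) hαk
        have hQG := qg_QG hM hq1 hq2 hαM hαsum hαmax k hlt
        have : qgVal q (fun i => α (k + 1 + i)) = qgVal q (fun _ : ℕ => M) :=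
          qg_val_congr (fun i => h (k + 1 + i) (by omega))
        rw [this, qg_val_constM hq1] at hQG
        linarith
  intro k
  by_contra h
  push_neg at h
  exact key k (fun j hj => le_antisymm (hαM j) (h j hj))

lemma qg_V_lt (hM : 0 < M) (hq1 : 1 < q) (hq2 : q < M + 1) {α : ℕ → ℕ} (hαM : ∀ i, α i ≤ M)
    (hαsum : qgVal q α = 1)
    (hαmax : ∀ β : ℕ → ℕ, (∀ i, β i ≤ M) → (∀ N, ∃ n ≥ N, β n ≠ 0) →
      qgVal q β = 1 → lexLE β α) :
    ∀ n, qgVal q (fun i => α (n + i)) < M / (q - 1) := by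
  have hq0 : 0 < q := by linarith
  intro n
  obtain ⟨j, hnj, hj⟩ := qg_notallM hM hq1 hq2 hαM hαsum hαmax n
  set c : ℕ → ℕ := fun i => α (n + i) with hcdef
  have hcM : ∀ i, c i ≤ M := fun i => hαM _
  set k := j - n with hkdef
  have hsplit := qg_val_split (M := M) hq1 hcM (k + 1)
  have htail : qgVal q (fun i => c (k + 1 + i)) ≤ M / (q - 1) := qg_val_le hq1 (fun i => hcM _)
  have hsum : ∑ i ∈ Finset.range (k + 1), (c i : ℝ) / q ^ (i + 1)
      ≤ (∑ i ∈ Finset.range (k + 1), (M : ℝ) / q ^ (i + 1)) - 1 / q ^ (k + 1) := by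
    rw [Finset.sum_range_succ, Finset.sum_range_succ]
    have h1 : ∑ i ∈ Finset.range k, (c i : ℝ) / q ^ (i + 1)
        ≤ ∑ i ∈ Finset.range k, (M : ℝ) / q ^ (i + 1) := by
      refine Finset.sum_le_sum (fun i _ => ?_)
      gcongr
      exact_mod_cast hcM i
    have h2 : (c k : ℝ) ≤ (M : ℝ) - 1 := by
      have hck : c k = α j := congrArg α (by omega)
      rw [hck, le_sub_iff_add_le]
      exact_mod_cast Nat.succ_le_of_lt hj
    have h3 : (c k : ℝ) / q ^ (k + 1) ≤ (M : ℝ) / q ^ (k + 1) - 1 / q ^ (k + 1) := by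
      rw [div_sub_div_same]
      gcongr
    linarith
  have hgeo := qg_geo (M := M) hq1 (k + 1)
  have hdiv : qgVal q (fun i => c (k + 1 + i)) / q ^ (k + 1) ≤ M / (q - 1) / q ^ (k + 1) := by
    gcongr
  have h1q : (0:ℝ) < 1 / q ^ (k + 1) := by positivity
  linarith [hsplit, hsum, hgeo, hdiv]

lemma qg_iter (hM : 0 < M) (hq1 : 1 < q) (hq2 : q < M + 1) {α : ℕ → ℕ} (hαM : ∀ i, α i ≤ M)
    (hαsum : qgVal q α = 1)
    {b : ℕ → ℕ} (hbM : ∀ i, b i ≤ M)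
    (H : ∀ m, b m < M → lexLE (fun i => b (m + 1 + i)) α)
    (m₀ : ℕ) (h₀ : lexLE (fun i => b (m₀ + i)) α)
    (hv : 1 < qgVal q (fun i => b (m₀ + i))) : False := by
  have hq0 : 0 < q := by linarith
  set ε := qgVal q (fun i => b (m₀ + i)) - 1 with hε
  have hε0 : 0 < ε := by linarith
  have hbase : 1 + ε ≤ qgVal q (fun i => b (m₀ + i)) := by rw [hε]; linarith
  clear hε hv
  clear_value ε
  have key : ∀ j : ℕ, ∃ m, lexLE (fun i => b (m + i)) α
      ∧ 1 + q ^ j * ε ≤ qgVal q (fun i => b (m + i)) := by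
    intro j
    induction j with
    | zero => exact ⟨m₀, h₀, by rw [pow_zero, one_mul]; exact hbase⟩
    | succ j ih =>
      obtain ⟨m, hlex, hval⟩ := ih
      have hqj : (0:ℝ) < q ^ j := by positivity
      have hgt : 1 < qgVal q (fun i => b (m + i)) := by nlinarith
      have hne : ¬ (fun i => b (m + i)) = α := by
        intro h
        rw [qg_val_congr (fun i => congrFun h i), hαsum] at hgt
        linarith
      rcases hlex with h | ⟨k, hag, hlt⟩
      · exact absurd h hne
      · -- hlt : b (m + k) < α k
        have hdiff := qg_val_diff (M := M) hq1 (fun i => hbM _) hαM k hag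
        have hcg : qgVal q (fun i => (fun i' => b (m + i')) (k + 1 + i))
            = qgVal q (fun i => b (m + k + 1 + i)) := qg_val_congr (fun i => congrArg b (by omega))
        rw [hcg, hαsum] at hdiff
        have hVpos : 0 ≤ qgVal q (fun i => α (k + 1 + i)) := qg_val_nonneg hq1 _
        have hstep : (1:ℝ) ≤ (α k : ℝ) - (b (m + k) : ℝ) := by
          have : b (m + k) + 1 ≤ α k := hlt
          have := (Nat.cast_le (α := ℝ)).mpr this
          push_cast at this
          linarith
        have hq2k : (0:ℝ) < q ^ (k + 1) := by positivity
        have hqk1 : q ≤ q ^ (k + 1) := by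
          calc q = q ^ 1 := (pow_one q).symm
            _ ≤ q ^ (k + 1) := pow_le_pow_right₀ (le_of_lt hq1) (by omega)
        have hrearr : qgVal q (fun i => b (m + k + 1 + i))
            = q ^ (k + 1) * (qgVal q (fun i => b (m + i)) - 1)
              + ((α k : ℝ) - (b (m + k) : ℝ)) + qgVal q (fun i => α (k + 1 + i)) := by
          have := hdiff
          field_simp at this ⊢
          linarith [this]
        have hbig : 1 + q ^ (j + 1) * ε ≤ qgVal q (fun i => b (m + k + 1 + i)) := by
          rw [hrearr]
          have h1 : q ^ (k + 1) * (qgVal q (fun i => b (m + i)) - 1) ≥ q ^ (k + 1) * (q ^ j * ε) := by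
            apply mul_le_mul_of_nonneg_left _ (le_of_lt hq2k)
            linarith
          have h2 : q ^ (k + 1) * (q ^ j * ε) ≥ q * (q ^ j * ε) := by
            apply mul_le_mul_of_nonneg_right hqk1
            positivity
          have h3 : q * (q ^ j * ε) = q ^ (j + 1) * ε := by rw [pow_succ]; ring
          linarith
        have hmem : b (m + k) < M := lt_of_lt_of_le hlt (hαM k)
        have hH := H (m + k) hmem
        exact ⟨m + k + 1, hH, hbig⟩
  obtain ⟨j, hj⟩ := pow_unbounded_of_one_lt ((M / (q - 1)) / ε) hq1
  obtain ⟨m, _, hval⟩ := key j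
  have h1 : (M / (q - 1) : ℝ) < q ^ j * ε := by
    rw [div_lt_iff₀ hε0] at hj
    linarith
  have h2 : qgVal q (fun i => b (m + i)) ≤ M / (q - 1) := qg_val_le hq1 (fun i => hbM _)
  linarith

theorem stmt18 (M : ℕ) (hM : 0 < M) (q : ℝ) (hq1 : 1 < q) (hq2 : q < M + 1)
    (x : ℝ) (hx : x ∈ Set.Icc (0 : ℝ) (M / (q - 1)))
    -- α is the quasi-greedy expansion of 1 in base q
    (α : ℕ → ℕ) (hαM : ∀ i, α i ≤ M)
    (hα0 : ∀ N, ∃ n ≥ N, α n ≠ 0)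
    (hαsum : (∑' i : ℕ, (α i : ℝ) / q ^ (i + 1)) = 1)
    (hαmax : ∀ β : ℕ → ℕ, (∀ i, β i ≤ M) → (∀ N, ∃ n ≥ N, β n ≠ 0) →
      (∑' i : ℕ, (β i : ℝ) / q ^ (i + 1)) = 1 → lexLE β α)
    -- a is the quasi-greedy expansion of x in base q
    (a : ℕ → ℕ) (haM : ∀ i, a i ≤ M)
    (ha0 : ∀ N, ∃ n ≥ N, a n ≠ 0)
    (hasum : (∑' i : ℕ, (a i : ℝ) / q ^ (i + 1)) = x)
    (hamax : ∀ β : ℕ → ℕ, (∀ i, β i ≤ M) → (∀ N, ∃ n ≥ N, β n ≠ 0) →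
      (∑' i : ℕ, (β i : ℝ) / q ^ (i + 1)) = x → lexLE β a) :
    ((∀ n, lexLE (fun i => a (n + i)) α ∧ lexLE (fun i => M - a (n + i)) α) →
      x ∈ Set.Icc ((M : ℝ) / (q - 1) - 1) 1) ∧
    (x ∈ Set.Icc ((M : ℝ) / (q - 1) - 1) 1 →
      (∀ n, a n < M → lexLE (fun i => a (n + 1 + i)) α) →
      (∀ n, 0 < a n → lexLE (fun i => M - a (n + 1 + i)) α) →
      ∀ n, lexLE (fun i => a (n + i)) α ∧ lexLE (fun i => M - a (n + i)) α) := by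
  have hq0 : 0 < q := by linarith
  have hvalα : qgVal q α = 1 := hαsum
  have hvala : qgVal q a = x := hasum
  have hαmax' : ∀ β : ℕ → ℕ, (∀ i, β i ≤ M) → (∀ N, ∃ n ≥ N, β n ≠ 0) →
      qgVal q β = 1 → lexLE β α := hαmax
  have hD1 : (1 : ℝ) < M / (q - 1) := by
    rw [lt_div_iff₀ (by linarith)]
    linarith
  have hDq : ((M : ℝ) / (q - 1)) * (q - 1) = M := div_mul_cancel₀ _ (by intro h; rw [sub_eq_zero] at h; linarith)
  have hvalA0 : qgVal q (fun i => a (0 + i)) = x := by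
    rw [qg_val_congr (fun i => congrArg a (Nat.zero_add i))]
    exact hvala
  have hreflA : ∀ n : ℕ, qgVal q (fun i => M - a (n + i)) = M / (q - 1) - qgVal q (fun i => a (n + i)) :=
    fun n => qg_val_reflect hq1 (fun i => haM (n + i))
  have hMsub : ∀ i, M - a i ≤ M := fun i => Nat.sub_le M (a i)
  constructor
  · -- Part 1
    intro hcond
    have hup : qgVal q (fun i => a (0 + i)) ≤ 1 := by
      by_contra h
      push_neg at h
      exact qg_iter hM hq1 hq2 hαM hvalα haM (fun m _ => (hcond (m + 1)).1) 0 (hcond 0).1 h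
    have hlo : qgVal q (fun i => M - a (0 + i)) ≤ 1 := by
      by_contra h
      push_neg at h
      exact qg_iter hM hq1 hq2 hαM hvalα hMsub (fun m _ => (hcond (m + 1)).2) 0 (hcond 0).2 h
    rw [hvalA0] at hup
    rw [hreflA 0, hvalA0] at hlo
    exact Set.mem_Icc.mpr ⟨by linarith, hup⟩
  · -- Part 2
    intro hxIcc h1 h2
    obtain ⟨hxl, hxu⟩ := Set.mem_Icc.mp hxIcc
    have hrec : ∀ n, qgVal q (fun i => a (n + 1 + i)) = q * qgVal q (fun i => a (n + i)) - (a n : ℝ) := by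
      intro n
      have hs := qg_val_step (M := M) hq1 (c := fun i => a (n + i)) (fun i => haM _)
      have e1 : ((a (n + 0) : ℕ) : ℝ) = (a n : ℝ) := by rw [congrArg a (Nat.add_zero n)]
      have e2 : qgVal q (fun i => (fun j => a (n + j)) (1 + i)) = qgVal q (fun i => a (n + 1 + i)) :=
        qg_val_congr (fun i => congrArg a (by omega))
      rw [e2] at hs
      rw [e1] at hs
      field_simp at hs
      linarith
    have claim : ∀ n, M / (q - 1) - 1 ≤ qgVal q (fun i => a (n + i))
        ∧ qgVal q (fun i => a (n + i)) ≤ 1 := by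
      intro n
      induction n with
      | zero => rw [hvalA0]; exact ⟨hxl, hxu⟩
      | succ n ih =>
        obtain ⟨ih1, ih2⟩ := ih
        have hupper : qgVal q (fun i => a (n + 1 + i)) ≤ 1 := by
          by_cases hc : a n < M
          · by_contra h
            push_neg at h
            exact qg_iter hM hq1 hq2 hαM hvalα haM h1 (n + 1) (h1 n hc) h
          · have hanM : (a n : ℝ) = (M : ℝ) := by
              have : a n = M := le_antisymm (haM n) (not_lt.mp hc)
              rw [this]
            rw [hrec n, hanM]
            have := mul_le_mul_of_nonneg_left ih2 (le_of_lt hq0)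
            linarith
        have hlower : M / (q - 1) - 1 ≤ qgVal q (fun i => a (n + 1 + i)) := by
          by_cases hc : 0 < a n
          · by_contra h
            push_neg at h
            have hv : 1 < qgVal q (fun i => M - a (n + 1 + i)) := by
              rw [hreflA (n + 1)]
              linarith
            exact qg_iter hM hq1 hq2 hαM hvalα hMsub
              (fun m hm => h2 m (by have := haM m; omega)) (n + 1) (h2 n hc) hv
          · have han0 : (a n : ℝ) = 0 := by
              have : a n = 0 := by omega
              rw [this]; norm_num
            rw [hrec n, han0]
            have e1 := mul_le_mul_of_nonneg_left ih1 (le_of_lt hq0)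
            linarith [e1, hDq, hq2]
        exact ⟨hlower, hupper⟩
    intro n
    constructor
    · rcases qg_lex_total (fun i => a (n + i)) α with h | ⟨k, hag, hlt⟩
      · exact h
      · exfalso
        have hdiff := qg_val_diff (M := M) hq1 (fun i => haM _) hαM k hag
        have hcg : qgVal q (fun i => (fun j => a (n + j)) (k + 1 + i))
            = qgVal q (fun i => a (n + k + 1 + i)) := qg_val_congr (fun i => congrArg a (by omega))
        rw [hcg, hvalα] at hdiff
        rw [← add_div] at hdiff
        have hstep : (1 : ℝ) ≤ (a (n + k) : ℝ) - (α k : ℝ) := by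
          have : α k + 1 ≤ a (n + k) := hlt
          have := (Nat.cast_le (α := ℝ)).mpr this
          push_cast at this
          linarith
        have hT := (claim (n + k + 1)).1
        have hV := qg_V_lt hM hq1 hq2 hαM hvalα hαmax' (k + 1)
        have hpos : (0:ℝ) < ((a (n + k) : ℝ) - (α k : ℝ))
            + (qgVal q (fun i => a (n + k + 1 + i)) - qgVal q (fun i => α (k + 1 + i))) := by
          linarith
        have := div_pos hpos (by positivity : (0:ℝ) < q ^ (k + 1))
        have hcontra := (claim n).2
        linarith [hdiff]
    · rcases qg_lex_total (fun i => M - a (n + i)) α with h | ⟨k, hag, hlt⟩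
      · exact h
      · exfalso
        have hdiff := qg_val_diff (M := M) hq1 (fun i : ℕ => Nat.sub_le M (a (n + i))) hαM k hag
        have hcg : qgVal q (fun i => (fun j => M - a (n + j)) (k + 1 + i))
            = qgVal q (fun i => M - a (n + k + 1 + i)) :=
          qg_val_congr (fun i => by simp only []; rw [show n + (k + 1 + i) = n + k + 1 + i by omega])
        rw [hcg, hvalα] at hdiff
        rw [← add_div] at hdiff
        have hstep : (1 : ℝ) ≤ ((M - a (n + k) : ℕ) : ℝ) - (α k : ℝ) := by
          have : α k + 1 ≤ M - a (n + k) := hlt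
          have := (Nat.cast_le (α := ℝ)).mpr this
          push_cast at this
          linarith
        have hT : M / (q - 1) - 1 ≤ qgVal q (fun i => M - a (n + k + 1 + i)) := by
          rw [hreflA (n + k + 1)]
          linarith [(claim (n + k + 1)).2]
        have hV := qg_V_lt hM hq1 hq2 hαM hvalα hαmax' (k + 1)
        have hpos : (0:ℝ) < (((M - a (n + k) : ℕ) : ℝ) - (α k : ℝ))
            + (qgVal q (fun i => M - a (n + k + 1 + i)) - qgVal q (fun i => α (k + 1 + i))) := by
          linarith
        have hdivpos := div_pos hpos (by positivity : (0:ℝ) < q ^ (k + 1))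
        have hrefl := hreflA n
        have hAn := (claim n).1
        linarith [hdiff]
end
end

section
/- Let M be a positive integer, 1 < q ≤ M+1, and let α(q) = (α_i) be the quasi-greedy expansion of 1 in base q. Let w = α_1⋯α_m be a word with digits in {0,...,M} such that α(q) = w^∞ (periodic with period w) and every tail of α(q) and of its reflection is ≤ α(q). Then for every sequence (c_i) with digits in {0,...,M} satisfying (M-w_1)⋯(M-w_m)^∞ ≤ c_{k+1}c_{k+2}⋯ ≤ w^∞ for all k ≥ 0 (lexicographically), and all integers j, k ≥ 0, one has the lexicographic inequality: the sequence obtained by prepending j copies of the reflected word (M-α_1)⋯(M-α_m) to c_{k+1}c_{k+2}⋯ is ≤ c_{k+1}c_{k+2}⋯. -/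
private lemma lexLE_trans {a b c : ℕ → ℕ} (h1 : lexLE a b) (h2 : lexLE b c) :
    lexLE a c := by
  rcases h1 with rfl | ⟨n, hn, hlt⟩
  · exact h2
  rcases h2 with rfl | ⟨n', hn', hlt'⟩
  · exact Or.inr ⟨n, hn, hlt⟩
  rcases lt_trichotomy n n' with h | rfl | h
  · exact Or.inr ⟨n, fun i hi => (hn i hi).trans (hn' i (hi.trans h)),
      hlt.trans_eq (hn' n h)⟩
  · exact Or.inr ⟨n, fun i hi => (hn i hi).trans (hn' i hi), hlt.trans hlt'⟩
  · exact Or.inr ⟨n', fun i hi => (hn i (hi.trans h)).trans (hn' i hi),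
      lt_of_le_of_lt (le_of_eq (hn n' h)) hlt'⟩

private lemma key_step (m : ℕ) (hm : 0 < m) (ρ s : ℕ → ℕ) (hρ : ∀ i, m ≤ i → ρ (i - m) = ρ i)
    (hs : lexLE ρ s) :
    lexLE (fun i => if i < m then ρ i else s (i - m)) s := by
  rcases hs with rfl | ⟨n, hn, hlt⟩
  · left; funext i; split
    · rfl
    · next h => exact hρ i (le_of_not_gt h)
  · right; refine ⟨n, ?_, ?_⟩
    · intro i hi; dsimp only; split
      · exact hn i hi
      · next h =>
        have hi' : i - m < n := by omega
        rw [← hn _ hi', hρ i (le_of_not_gt h), hn i hi]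
    · dsimp only; split
      · exact hlt
      · next h =>
        rw [← hn (n - m) (by omega), hρ n (le_of_not_gt h)]; exact hlt

private lemma low_step (m : ℕ) (ρ s : ℕ → ℕ) (hρ : ∀ i, m ≤ i → ρ (i - m) = ρ i)
    (hs : lexLE ρ s) :
    lexLE ρ (fun i => if i < m then ρ i else s (i - m)) := by
  rcases hs with rfl | ⟨n, hn, hlt⟩
  · left; funext i; split
    · rfl
    · next h => exact (hρ i (le_of_not_gt h)).symm
  · right; refine ⟨n + m, ?_, ?_⟩
    · intro i hi; dsimp only; split
      · rfl
      · next h =>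
        rw [← hρ i (le_of_not_gt h)]; exact hn _ (by omega)
    · dsimp only
      rw [if_neg (by omega)]
      have h1 : n + m - m = n := by omega
      rw [h1, ← hρ (n + m) (by omega), h1]
      exact hlt

theorem stmt19 (M : ℕ) (hM : 0 < M) (q : ℝ) (hq1 : 1 < q) (hq2 : q ≤ M + 1)
    -- α is the quasi-greedy expansion of 1 in base q
    (α : ℕ → ℕ) (hαM : ∀ i, α i ≤ M)
    (hα0 : ∀ N, ∃ n ≥ N, α n ≠ 0)
    (hαsum : (∑' i : ℕ, (α i : ℝ) / q ^ (i + 1)) = 1)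
    (hαmax : ∀ β : ℕ → ℕ, (∀ i, β i ≤ M) → (∀ N, ∃ n ≥ N, β n ≠ 0) →
      (∑' i : ℕ, (β i : ℝ) / q ^ (i + 1)) = 1 → lexLE β α)
    -- α = w^∞ where w = α_1 ⋯ α_m
    (m : ℕ) (hm : 0 < m) (hper : ∀ i, α (i + m) = α i)
    -- every tail of α and of its reflection is ≤ α
    (htail : ∀ k, lexLE (fun i => α (k + i)) α)
    (hrtail : ∀ k, lexLE (fun i => M - α (k + i)) α)
    -- c is bounded between the reflection of w^∞ and w^∞ at every tail
    (c : ℕ → ℕ) (hc : ∀ i, c i ≤ M)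
    (hcb : ∀ k, lexLE (fun i => M - α i) (fun i => c (k + i)) ∧
      lexLE (fun i => c (k + i)) α) :
    ∀ j k : ℕ,
      lexLE (fun i => if i < j * m then M - α (i % m) else c (k + (i - j * m)))
        (fun i => c (k + i)) := by
  intro j k
  set ρ : ℕ → ℕ := fun i => M - α i with hρdef
  -- periodicity of α modulo m
  have hαmul : ∀ t r, α (r + t * m) = α r := by
    intro t
    induction t with
    | zero => simp
    | succ t ih =>
        intro r
        have : r + (t + 1) * m = r + t * m + m := by ring
        rw [this, hper, ih]
  have hmod : ∀ i, α (i % m) = α i := by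
    intro i
    conv_rhs => rw [← Nat.mod_add_div i m]
    rw [mul_comm]
    exact (hαmul (i / m) (i % m)).symm
  have hρsub : ∀ i, m ≤ i → ρ (i - m) = ρ i := by
    intro i hi
    have h2 := hper (i - m)
    rw [Nat.sub_add_cancel hi] at h2
    simp only [hρdef]
    rw [h2]
  -- the family of sequences
  set D : ℕ → ℕ → ℕ := fun j i => if i < j * m then ρ i else c (k + (i - j * m))
    with hD
  have hgoal : (fun i => if i < j * m then M - α (i % m) else c (k + (i - j * m)))
      = D j := by
    funext i
    simp only [hD, hρdef, hmod]
  have hD0 : D 0 = fun i => c (k + i) := by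
    funext i; simp [hD]
  have hDsucc : ∀ j, D (j + 1) = fun i => if i < m then ρ i else D j (i - m) := by
    intro j
    funext i
    have e1 : (j + 1) * m = j * m + m := by ring
    simp only [hD, e1]
    by_cases h1 : i < m
    · rw [if_pos h1, if_pos (by omega : i < j * m + m)]
    · rw [if_neg h1]
      by_cases h2 : i - m < j * m
      · rw [if_pos (by omega), if_pos h2]
        exact (hρsub i (le_of_not_gt h1)).symm
      · rw [if_neg (by omega), if_neg h2]
        congr 1
        omega
  have hlow : ∀ j, lexLE ρ (D j) := by
    intro j
    induction j with
    | zero => rw [hD0]; exact (hcb k).1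
    | succ j ih => rw [hDsucc]; exact low_step m ρ (D j) hρsub ih
  have hmain : ∀ j, lexLE (D j) (D 0) := by
    intro j
    induction j with
    | zero => exact Or.inl rfl
    | succ j ih =>
        refine lexLE_trans ?_ ih
        rw [hDsucc]
        exact key_step m hm ρ (D j) hρsub (hlow j)
  rw [hgoal, ← hD0]
  exact hmain j
end
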